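/- arXiv:2203.11995 — 7 statements merged into one kernel-verified Lean document; each statement's English description precedes it below -/
import Mathlib

section
/- Let (ε_n)_{n≥1} be a sequence of strictly positive real numbers with L := sup_n ε_n < 1, set ε_0 = 0, and let (α_n)_{n≥1} be a sequence of strictly positive real numbers satisfying α_{n+1} ≥ (1 + L/n)·α_n for all n ≥ 1 and α_n/n → 0. Then there exists a sequence (d_n)_{n≥1} of strictly positive real numbers such that: (1) 0 < d_1 ≤ α_1; and (2) for all n ≥ 1 and all 1 ≤ k ≤ n+1, d_n · (1 + ε_{k−1}/n)/(1 + ε_k/(n+2)) < d_{n+1} ≤ α_{n+1}. -/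
/-- Given a strictly positive sequence `(ε n)_{n ≥ 1}` with supremum `L < 1`
(and `ε 0 = 0`), and a strictly positive sequence `(α n)_{n ≥ 1}` with
`α (n+1) ≥ (1 + L/n) * α n` and `α n / n → 0`, there exists a strictly positive sequence
`(d n)_{n ≥ 1}` with `0 < d 1 ≤ α 1` and, for all `n ≥ 1` and `1 ≤ k ≤ n+1`,
`d n * (1 + ε (k-1)/n) / (1 + ε k/(n+2)) < d (n+1) ≤ α (n+1)`. -/
theorem exists_d_seq (ε : ℕ → ℝ) (hε0 : ε 0 = 0) (hεpos : ∀ n, 1 ≤ n → 0 < ε n)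
    (L : ℝ) (hL : IsLUB {x : ℝ | ∃ n, 1 ≤ n ∧ ε n = x} L) (hL1 : L < 1)
    (α : ℕ → ℝ) (hαpos : ∀ n, 1 ≤ n → 0 < α n)
    (hαgrow : ∀ n, 1 ≤ n → (1 + L / n) * α n ≤ α (n + 1))
    (hαlim : Filter.Tendsto (fun n : ℕ => α n / n) Filter.atTop (nhds 0)) :
    ∃ d : ℕ → ℝ, (∀ n, 1 ≤ n → 0 < d n) ∧
      (0 < d 1 ∧ d 1 ≤ α 1) ∧
      (∀ n, 1 ≤ n → ∀ k, 1 ≤ k → k ≤ n + 1 →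
        d n * (1 + ε (k - 1) / n) / (1 + ε k / (n + 2)) < d (n + 1) ∧
        d (n + 1) ≤ α (n + 1)) := by
  have hLpos : 0 < L := lt_of_lt_of_le (hεpos 1 le_rfl) (hL.1 ⟨1, le_rfl, rfl⟩)
  have hεle : ∀ m : ℕ, ε m ≤ L := by
    intro m
    rcases Nat.eq_zero_or_pos m with hm | hm
    · rw [hm, hε0]; exact hLpos.le
    · exact hL.1 ⟨m, hm, rfl⟩
  refine ⟨α, hαpos, ⟨hαpos 1 le_rfl, le_rfl⟩, ?_⟩
  intro n hn k hk hkn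
  refine ⟨?_, le_rfl⟩
  have hnR : (1 : ℝ) ≤ (n : ℝ) := by exact_mod_cast hn
  have hn0 : (0 : ℝ) < (n : ℝ) := lt_of_lt_of_le one_pos hnR
  have hD : (1 : ℝ) < 1 + ε k / (n + 2) := by
    have h2 : (0 : ℝ) < (n : ℝ) + 2 := by positivity
    have := div_pos (hεpos k hk) h2
    linarith
  have hnum : 1 + ε (k - 1) / n ≤ 1 + L / n := by
    gcongr
    exact hεle (k - 1)
  have hαn := hαpos n hn
  have hstep : α n * (1 + ε (k - 1) / n) / (1 + ε k / (n + 2)) < α n * (1 + L / n) := by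
    have hpos : 0 < α n * (1 + L / n) := by positivity
    calc α n * (1 + ε (k - 1) / n) / (1 + ε k / (n + 2))
        ≤ α n * (1 + L / n) / (1 + ε k / (n + 2)) := by
          gcongr
      _ < α n * (1 + L / n) := by
          exact div_lt_self hpos hD
  calc α n * (1 + ε (k - 1) / n) / (1 + ε k / (n + 2))
      < α n * (1 + L / n) := hstep
    _ = (1 + L / n) * α n := mul_comm _ _
    _ ≤ α (n + 1) := hαgrow n hn
end

section
/- Let C and Z be bounded operators on H, let T = C∘Z − Z∘C, and let (k_n)_{n≥1} be a sequence of positive integers with partial sums s_n. Suppose at least one of C, Z is block tridiagonal with central block sizes k_n. Then for every n ≥ 1: ∑_{j=1}^{s_n} ⟨e_j, T e_j⟩ = ∑_{j=1}^{s_n} ⟨e_j, (A_n(C)∘B_n(Z) − A_n(Z)∘B_n(C)) e_j⟩, and |∑_{j=1}^{s_n} ⟨e_j, T e_j⟩| ≤ k_n·(‖A_n(C)‖ + ‖B_n(C)‖)·‖Z‖. -/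
open Filter

variable {H : Type*} [NormedAddCommGroup H] [InnerProductSpace ℂ H] [CompleteSpace H]

/-- Partial sums `s n = k 1 + ⋯ + k n` of a sequence of block sizes (with `s 0 = 0`). -/
def psum (k : ℕ → ℕ) (n : ℕ) : ℕ := ∑ j ∈ Finset.Icc 1 n, k j

/-- The block index `b i` of an index `i ≥ 1`: the unique `n` with `s (n-1) < i ≤ s n`
(realized as the least `n` with `i ≤ s n`). -/
noncomputable def blockIdx (k : ℕ → ℕ) (i : ℕ) : ℕ := sInf {n | i ≤ psum k n}

/-- A bounded operator `W` is block tridiagonal with central block sizes `k n` if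
`⟪e i, W (e j)⟫ = 0` whenever `|b i - b j| ≥ 2`. -/
def IsBlockTridiagonal (e : HilbertBasis ℕ+ ℂ H) (k : ℕ → ℕ) (W : H →L[ℂ] H) : Prop :=
  ∀ i j : ℕ+, 2 ≤ |(blockIdx k (i : ℕ) : ℤ) - (blockIdx k (j : ℕ) : ℤ)| →
    (inner ℂ (e i) (W (e j)) : ℂ) = 0

/-- The orthogonal projection `P n` onto `span {e i : s (n-1) < i ≤ s n}`. -/
noncomputable def blockProj (e : HilbertBasis ℕ+ ℂ H) (k : ℕ → ℕ) (n : ℕ) : H →L[ℂ] H :=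
  ∑ i ∈ (Finset.Ioc (psum k (n - 1)) (psum k n)).attach,
    (innerSL ℂ (e ⟨i.1, Nat.lt_of_le_of_lt (Nat.zero_le _) (Finset.mem_Ioc.mp i.2).1⟩)).smulRight
      (e ⟨i.1, Nat.lt_of_le_of_lt (Nat.zero_le _) (Finset.mem_Ioc.mp i.2).1⟩)

/-- The partial trace `∑_{j=1}^m ⟪e j, T (e j)⟫`. -/
noncomputable def ptrace (e : HilbertBasis ℕ+ ℂ H) (T : H →L[ℂ] H) (m : ℕ) : ℂ :=
  ∑ i ∈ (Finset.Icc 1 m).attach,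
    (inner ℂ (e ⟨i.1, (Finset.mem_Icc.mp i.2).1⟩) (T (e ⟨i.1, (Finset.mem_Icc.mp i.2).1⟩)) : ℂ)

/-- The upper off-diagonal block `A n (W) = P n ∘ W ∘ P (n+1)`. -/
noncomputable def blockA (e : HilbertBasis ℕ+ ℂ H) (k : ℕ → ℕ) (n : ℕ) (W : H →L[ℂ] H) :
    H →L[ℂ] H :=
  blockProj e k n ∘L W ∘L blockProj e k (n + 1)

/-- The lower off-diagonal block `B n (W) = P (n+1) ∘ W ∘ P n`. -/
noncomputable def blockB (e : HilbertBasis ℕ+ ℂ H) (k : ℕ → ℕ) (n : ℕ) (W : H →L[ℂ] H) :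
    H →L[ℂ] H :=
  blockProj e k (n + 1) ∘L W ∘L blockProj e k n

/-! Write `Q` for the projection onto the first `s n` basis vectors and `tr_Q` for the partial
trace. Finite traces are cyclic through `Q`: `tr_Q (C Q Z) = tr_Q (Z Q C)`. Hence the partial
trace of `CZ - ZC` is `tr_Q (C (1 - Q) Z) - tr_Q (Z (1 - Q) C)`, which only sees the corners
`Q C (1 - Q)` and `(1 - Q) Z Q` (and their counterparts with `C` and `Z` exchanged). If `C` is
block tridiagonal, its corner is the single block `A n (C) = P n C P (n+1)`; if `Z` is, its corner
is `B n (Z)`. Either way `tr_Q (C (1 - Q) Z) = tr_{P n} (C P (n+1) Z) = tr_Q (A n (C) B n (Z))`.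
The bound holds because `A n (C) B n (Z) - A n (Z) B n (C)` maps into the `n`-th block, of
dimension `k n`. -/

section FiniteProjection

variable (𝕜 : Type*) {E ι : Type*} [RCLike 𝕜] [NormedAddCommGroup E] [InnerProductSpace 𝕜 E]
  (v : ι → E) (s : Finset ι)

local notation "⟪" x ", " y "⟫" => inner 𝕜 x y

noncomputable def finProj : E →L[𝕜] E :=
  ∑ i ∈ s, (innerSL 𝕜 (v i)).smulRight (v i)

variable {𝕜}

noncomputable def finTrace (X : E →L[𝕜] E) : 𝕜 :=
  ∑ i ∈ s, ⟪v i, X (v i)⟫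

lemma finProj_apply (x : E) : finProj 𝕜 v s x = ∑ i ∈ s, ⟪v i, x⟫ • v i := by
  simp [finProj]

variable {v}

lemma finTrace_sub (X Y : E →L[𝕜] E) :
    finTrace v s (X - Y) = finTrace v s X - finTrace v s Y := by
  simp [finTrace, inner_sub_right, Finset.sum_sub_distrib]

lemma finTrace_comp_finProj_comp (X Y : E →L[𝕜] E) :
    finTrace v s (X ∘L finProj 𝕜 v s ∘L Y) =
      ∑ i ∈ s, ∑ j ∈ s, ⟪v i, X (v j)⟫ * ⟪v j, Y (v i)⟫ := by
  simp only [finTrace, ContinuousLinearMap.comp_apply, finProj_apply, map_sum, map_smul,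
    inner_sum, inner_smul_right, mul_comm]

lemma finTrace_comp_finProj_comp_comm (X Y : E →L[𝕜] E) :
    finTrace v s (X ∘L finProj 𝕜 v s ∘L Y) = finTrace v s (Y ∘L finProj 𝕜 v s ∘L X) := by
  rw [finTrace_comp_finProj_comp, finTrace_comp_finProj_comp, Finset.sum_comm]
  simp only [mul_comm]

lemma finTrace_commutator (X Y : E →L[𝕜] E) :
    finTrace v s (X ∘L Y - Y ∘L X) =
      finTrace v s (X ∘L (1 - finProj 𝕜 v s) ∘L Y) -
        finTrace v s (Y ∘L (1 - finProj 𝕜 v s) ∘L X) := by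
  simp only [ContinuousLinearMap.sub_comp, ContinuousLinearMap.comp_sub,
    ContinuousLinearMap.one_def, ContinuousLinearMap.id_comp, finTrace_sub]
  rw [finTrace_comp_finProj_comp_comm s X Y]
  abel

lemma norm_finProj_le (hv : Orthonormal 𝕜 v) : ‖finProj 𝕜 v s‖ ≤ 1 := by
  refine ContinuousLinearMap.opNorm_le_bound _ zero_le_one fun x => ?_
  have hsq : ‖finProj 𝕜 v s x‖ ^ 2 = ∑ i ∈ s, ‖⟪v i, x⟫‖ ^ 2 := by
    rw [finProj_apply, @norm_sq_eq_re_inner 𝕜, hv.inner_sum]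
    simp only [RCLike.conj_mul, map_sum]
    norm_cast
  rw [one_mul, ← sq_le_sq₀ (norm_nonneg _) (norm_nonneg _), hsq]
  exact hv.sum_inner_products_le x

lemma norm_finTrace_le (hv : Orthonormal 𝕜 v) (X : E →L[𝕜] E) :
    ‖finTrace v s X‖ ≤ s.card * ‖X‖ := by
  calc ‖finTrace v s X‖ ≤ ∑ i ∈ s, ‖⟪v i, X (v i)⟫‖ := norm_sum_le _ _
    _ ≤ ∑ i ∈ s, ‖X‖ := Finset.sum_le_sum fun i _ => ?_
    _ = s.card * ‖X‖ := by rw [Finset.sum_const, nsmul_eq_mul]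
  calc ‖⟪v i, X (v i)⟫‖ ≤ ‖v i‖ * (‖X‖ * ‖v i‖) :=
        (norm_inner_le_norm _ _).trans (by gcongr; exact X.le_opNorm _)
    _ = ‖X‖ := by rw [hv.norm_eq_one]; ring

lemma norm_finProj_comp_comp_finProj_le (t : Finset ι) (hv : Orthonormal 𝕜 v) (X : E →L[𝕜] E) :
    ‖finProj 𝕜 v s ∘L X ∘L finProj 𝕜 v t‖ ≤ ‖X‖ :=
  calc _ ≤ ‖finProj 𝕜 v s‖ * (‖X‖ * ‖finProj 𝕜 v t‖) :=
        (ContinuousLinearMap.opNorm_comp_le _ _).trans (by gcongr; exact X.opNorm_comp_le _)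
    _ ≤ 1 * (‖X‖ * 1) := by gcongr <;> exact norm_finProj_le _ hv
    _ = ‖X‖ := by ring

variable [DecidableEq ι]

lemma finProj_apply_self (hv : Orthonormal 𝕜 v) (j : ι) :
    finProj 𝕜 v s (v j) = if j ∈ s then v j else 0 := by
  simp only [finProj_apply, orthonormal_iff_ite.mp hv, ite_smul, one_smul, zero_smul,
    Finset.sum_ite_eq']

lemma inner_finProj (hv : Orthonormal 𝕜 v) (i : ι) (x : E) :
    ⟪v i, finProj 𝕜 v s x⟫ = if i ∈ s then ⟪v i, x⟫ else 0 := by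
  simp only [finProj_apply, inner_sum, inner_smul_right, orthonormal_iff_ite.mp hv, mul_ite,
    mul_one, mul_zero, Finset.sum_ite_eq]

lemma finProj_comp_finProj (hv : Orthonormal 𝕜 v) :
    finProj 𝕜 v s ∘L finProj 𝕜 v s = finProj 𝕜 v s := by
  ext x
  simp only [ContinuousLinearMap.comp_apply, finProj_apply v s x, map_sum, map_smul,
    finProj_apply_self s hv]
  exact Finset.sum_congr rfl fun i hi => by rw [if_pos hi]

lemma finTrace_finProj_comp (hv : Orthonormal 𝕜 v) {s t : Finset ι} (hst : s ⊆ t)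
    (X : E →L[𝕜] E) :
    finTrace v t (finProj 𝕜 v s ∘L X) = finTrace v s X := by
  simp only [finTrace, ContinuousLinearMap.comp_apply, inner_finProj s hv, Finset.sum_ite_mem,
    Finset.inter_eq_right.mpr hst]

lemma finTrace_comp_finProj (hv : Orthonormal 𝕜 v) {s t : Finset ι} (hst : s ⊆ t)
    (X : E →L[𝕜] E) :
    finTrace v t (X ∘L finProj 𝕜 v s) = finTrace v s X := by
  simp [finTrace, finProj_apply_self s hv, apply_ite, Finset.sum_ite_mem,
    Finset.inter_eq_right.mpr hst]

end FiniteProjection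

namespace HilbertBasis

variable {𝕜 E F ι : Type*} [RCLike 𝕜] [NormedAddCommGroup E] [InnerProductSpace 𝕜 E]
  [NormedAddCommGroup F] [InnerProductSpace 𝕜 F]

lemma ext_inner (b : HilbertBasis ι 𝕜 E) {x y : E}
    (h : ∀ i, inner 𝕜 (b i) x = inner 𝕜 (b i) y) : x = y :=
  b.repr.injective <| lp.ext <| funext fun i => by simp only [b.repr_apply_apply, h]

lemma ext_clm (b : HilbertBasis ι 𝕜 E) {X Y : E →L[𝕜] F} (h : ∀ j, X (b j) = Y (b j)) : X = Y :=
  ContinuousLinearMap.ext_on (Submodule.dense_iff_topologicalClosure_eq_top.mpr b.dense_span)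
    (Set.forall_mem_range.mpr h)

end HilbertBasis

section Blocks

variable {k : ℕ → ℕ}

lemma psum_mono (k : ℕ → ℕ) : Monotone (psum k) := fun _ _ h =>
  Finset.sum_le_sum_of_subset (Finset.Icc_subset_Icc_right h)

lemma psum_eq_psum_sub_one_add {n : ℕ} (hn : 1 ≤ n) : psum k n = psum k (n - 1) + k n := by
  obtain ⟨m, rfl⟩ := Nat.exists_eq_add_of_le' hn
  simp [psum, Finset.sum_Icc_succ_top]

lemma self_le_psum (hk : ∀ n, 1 ≤ n → 1 ≤ k n) (i : ℕ) : i ≤ psum k i := by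
  simpa [psum] using
    Finset.card_nsmul_le_sum (Finset.Icc 1 i) k 1 fun j hj => hk j (Finset.mem_Icc.mp hj).1

lemma le_psum_iff_blockIdx_le (hk : ∀ n, 1 ≤ n → 1 ≤ k n) {i n : ℕ} :
    i ≤ psum k n ↔ blockIdx k i ≤ n :=
  ⟨fun h => Nat.sInf_le h, fun h =>
    (Nat.sInf_mem (s := {n | i ≤ psum k n}) ⟨i, self_le_psum hk i⟩).trans (psum_mono k h)⟩

lemma sum_attach_eq_sum_preimage_coe {M : Type*} [AddCommMonoid M] (s : Finset ℕ)
    (hs : ∀ i ∈ s, 0 < i) (f : ℕ+ → M) :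
    ∑ i ∈ s.attach, f ⟨i, hs i i.2⟩ = ∑ j ∈ s.preimage (↑) PNat.coe_injective.injOn, f j :=
  Finset.sum_bij' (fun i _ => ⟨i, hs i i.2⟩) (fun j hj => ⟨j, Finset.mem_preimage.mp hj⟩)
    (fun i _ => Finset.mem_preimage.mpr i.2) (fun _ _ => Finset.mem_attach _ _)
    (fun _ _ => rfl) (fun _ _ => rfl) (fun _ _ => rfl)

lemma card_preimage_coe (s : Finset ℕ) (hs : ∀ i ∈ s, 0 < i) :
    (s.preimage ((↑) : ℕ+ → ℕ) PNat.coe_injective.injOn).card = s.card := by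
  rw [Finset.card_eq_sum_ones, ← sum_attach_eq_sum_preimage_coe s hs, Finset.sum_const,
    Finset.card_attach, smul_eq_mul, mul_one]

noncomputable def initSet (m : ℕ) : Finset ℕ+ :=
  (Finset.Icc 1 m).preimage (↑) PNat.coe_injective.injOn

noncomputable def blockSet (k : ℕ → ℕ) (n : ℕ) : Finset ℕ+ :=
  (Finset.Ioc (psum k (n - 1)) (psum k n)).preimage (↑) PNat.coe_injective.injOn

lemma mem_initSet {m : ℕ} {j : ℕ+} : j ∈ initSet m ↔ (j : ℕ) ≤ m := by
  simp [initSet, Nat.one_le_iff_ne_zero]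

lemma mem_blockSet (hk : ∀ n, 1 ≤ n → 1 ≤ k n) {n : ℕ} {j : ℕ+} :
    j ∈ blockSet k n ↔ blockIdx k j = n := by
  have hpos : ¬ blockIdx k j ≤ 0 := by
    simp [← le_psum_iff_blockIdx_le hk, psum]
  rw [blockSet, Finset.mem_preimage, Finset.mem_Ioc, ← not_le, le_psum_iff_blockIdx_le hk,
    le_psum_iff_blockIdx_le hk]
  omega

lemma blockSet_subset_initSet (n : ℕ) : blockSet k n ⊆ initSet (psum k n) := fun _ hj =>
  mem_initSet.mpr (Finset.mem_Ioc.mp (Finset.mem_preimage.mp hj)).2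

lemma card_blockSet {n : ℕ} (hn : 1 ≤ n) : (blockSet k n).card = k n := by
  rw [blockSet, card_preimage_coe _ fun _ hi => Nat.zero_lt_of_lt (Finset.mem_Ioc.mp hi).1,
    Nat.card_Ioc, psum_eq_psum_sub_one_add hn, Nat.add_sub_cancel_left]

end Blocks

section BlockOperators

variable {E : Type*} [NormedAddCommGroup E] [InnerProductSpace ℂ E] {e : HilbertBasis ℕ+ ℂ E}
  {k : ℕ → ℕ}

lemma blockProj_eq_finProj (n : ℕ) :
    blockProj e k n = finProj ℂ e (blockSet k n) := by
  rw [blockProj, finProj, blockSet]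
  exact sum_attach_eq_sum_preimage_coe _ (fun _ hi => Nat.zero_lt_of_lt (Finset.mem_Ioc.mp hi).1)
    fun j => (innerSL ℂ (e j)).smulRight (e j)

lemma ptrace_eq_finTrace (T : E →L[ℂ] E) (m : ℕ) :
    ptrace e T m = finTrace e (initSet m) T := by
  rw [ptrace, finTrace, initSet]
  exact sum_attach_eq_sum_preimage_coe _ (fun _ hi => (Finset.mem_Icc.mp hi).1)
    fun j => inner ℂ (e j) (T (e j))

lemma IsBlockTridiagonal.inner_eq_zero {W : E →L[ℂ] E} (hW : IsBlockTridiagonal e k W) {i j : ℕ+}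
    (h : blockIdx k i + 2 ≤ blockIdx k j ∨ blockIdx k j + 2 ≤ blockIdx k i) :
    inner ℂ (e i) (W (e j)) = 0 :=
  hW i j (by rw [le_abs']; omega)

lemma IsBlockTridiagonal.finProj_comp_comp_one_sub (hk : ∀ n, 1 ≤ n → 1 ≤ k n) {W : E →L[ℂ] E}
    (hW : IsBlockTridiagonal e k W) (n : ℕ) :
    finProj ℂ e (initSet (psum k n)) ∘L W ∘L (1 - finProj ℂ e (initSet (psum k n))) =
      blockA e k n W := by
  refine e.ext_clm fun j => e.ext_inner fun i => ?_
  simp only [blockA, blockProj_eq_finProj, ContinuousLinearMap.comp_apply,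
    sub_apply, one_apply_eq_self, map_sub, inner_sub_right,
    finProj_apply_self _ e.orthonormal, inner_finProj _ e.orthonormal, mem_initSet,
    le_psum_iff_blockIdx_le hk, mem_blockSet hk]
  by_cases hfar : blockIdx k i + 2 ≤ blockIdx k j ∨ blockIdx k j + 2 ≤ blockIdx k i
  · simp [apply_ite, hW.inner_eq_zero hfar]
  · split_ifs <;> simp <;> omega

lemma IsBlockTridiagonal.one_sub_comp_comp_finProj (hk : ∀ n, 1 ≤ n → 1 ≤ k n) {W : E →L[ℂ] E}
    (hW : IsBlockTridiagonal e k W) (n : ℕ) :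
    (1 - finProj ℂ e (initSet (psum k n))) ∘L W ∘L finProj ℂ e (initSet (psum k n)) =
      blockB e k n W := by
  refine e.ext_clm fun j => e.ext_inner fun i => ?_
  simp only [blockB, blockProj_eq_finProj, ContinuousLinearMap.comp_apply, sub_apply,
    one_apply_eq_self, inner_sub_right, finProj_apply_self _ e.orthonormal,
    inner_finProj _ e.orthonormal, mem_initSet, le_psum_iff_blockIdx_le hk, mem_blockSet hk]
  by_cases hfar : blockIdx k i + 2 ≤ blockIdx k j ∨ blockIdx k j + 2 ≤ blockIdx k i
  · simp [apply_ite, hW.inner_eq_zero hfar]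
  · split_ifs <;> simp <;> omega

variable (n : ℕ) (X Y : E →L[ℂ] E)

lemma finTrace_blockA_comp_blockB :
    finTrace e (initSet (psum k n)) (blockA e k n X ∘L blockB e k n Y) =
      finTrace e (blockSet k n) (X ∘L finProj ℂ e (blockSet k (n + 1)) ∘L Y) := by
  simp only [blockA, blockB, blockProj_eq_finProj, ContinuousLinearMap.comp_assoc]
  rw [finTrace_finProj_comp e.orthonormal (blockSet_subset_initSet n),
    ← ContinuousLinearMap.comp_assoc (finProj ℂ e _), finProj_comp_finProj _ e.orthonormal]
  simpa only [ContinuousLinearMap.comp_assoc] using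
    finTrace_comp_finProj e.orthonormal subset_rfl (X ∘L finProj ℂ e (blockSet k (n + 1)) ∘L Y)

lemma blockProj_comp_blockA : blockProj e k n ∘L blockA e k n X = blockA e k n X := by
  rw [blockA, ← ContinuousLinearMap.comp_assoc, blockProj_eq_finProj,
    finProj_comp_finProj _ e.orthonormal]

lemma norm_blockA_le : ‖blockA e k n X‖ ≤ ‖X‖ := by
  rw [blockA, blockProj_eq_finProj, blockProj_eq_finProj]
  exact norm_finProj_comp_comp_finProj_le _ _ e.orthonormal X

lemma norm_blockB_le : ‖blockB e k n X‖ ≤ ‖X‖ := by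
  rw [blockB, blockProj_eq_finProj, blockProj_eq_finProj]
  exact norm_finProj_comp_comp_finProj_le _ _ e.orthonormal X

variable {X Y}

lemma finTrace_comp_one_sub_comp_of_left (hk : ∀ n, 1 ≤ n → 1 ≤ k n)
    (hX : IsBlockTridiagonal e k X) :
    finTrace e (initSet (psum k n)) (X ∘L (1 - finProj ℂ e (initSet (psum k n))) ∘L Y) =
      finTrace e (blockSet k n) (X ∘L finProj ℂ e (blockSet k (n + 1)) ∘L Y) := by
  rw [← finTrace_finProj_comp e.orthonormal subset_rfl]
  simp only [← ContinuousLinearMap.comp_assoc]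
  rw [ContinuousLinearMap.comp_assoc _ X, hX.finProj_comp_comp_one_sub hk, blockA,
    blockProj_eq_finProj, blockProj_eq_finProj]
  simp only [ContinuousLinearMap.comp_assoc]
  exact finTrace_finProj_comp e.orthonormal (blockSet_subset_initSet n) _

lemma finTrace_comp_one_sub_comp_of_right (hk : ∀ n, 1 ≤ n → 1 ≤ k n)
    (hY : IsBlockTridiagonal e k Y) :
    finTrace e (initSet (psum k n)) (X ∘L (1 - finProj ℂ e (initSet (psum k n))) ∘L Y) =
      finTrace e (blockSet k n) (X ∘L finProj ℂ e (blockSet k (n + 1)) ∘L Y) := by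
  rw [← finTrace_comp_finProj e.orthonormal subset_rfl]
  simp only [ContinuousLinearMap.comp_assoc]
  rw [hY.one_sub_comp_comp_finProj hk, blockB, blockProj_eq_finProj, blockProj_eq_finProj]
  simp only [← ContinuousLinearMap.comp_assoc]
  exact finTrace_comp_finProj e.orthonormal (blockSet_subset_initSet n) _

lemma finTrace_comp_one_sub_comp (hk : ∀ n, 1 ≤ n → 1 ≤ k n)
    (h : IsBlockTridiagonal e k X ∨ IsBlockTridiagonal e k Y) :
    finTrace e (initSet (psum k n)) (X ∘L (1 - finProj ℂ e (initSet (psum k n))) ∘L Y) =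
      finTrace e (initSet (psum k n)) (blockA e k n X ∘L blockB e k n Y) := by
  rw [finTrace_blockA_comp_blockB]
  rcases h with hX | hY
  exacts [finTrace_comp_one_sub_comp_of_left n hk hX, finTrace_comp_one_sub_comp_of_right n hk hY]

lemma ptrace_commutator_eq (hk : ∀ n, 1 ≤ n → 1 ≤ k n)
    (h : IsBlockTridiagonal e k X ∨ IsBlockTridiagonal e k Y) :
    ptrace e (X ∘L Y - Y ∘L X) (psum k n) =
      ptrace e (blockA e k n X ∘L blockB e k n Y - blockA e k n Y ∘L blockB e k n X)
        (psum k n) := by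
  rw [ptrace_eq_finTrace, ptrace_eq_finTrace, finTrace_commutator, finTrace_sub,
    finTrace_comp_one_sub_comp n hk h, finTrace_comp_one_sub_comp n hk h.symm]

lemma norm_ptrace_blockA_comp_blockB_sub_le {n : ℕ} (hn : 1 ≤ n) (X Y : E →L[ℂ] E) :
    ‖ptrace e (blockA e k n X ∘L blockB e k n Y - blockA e k n Y ∘L blockB e k n X) (psum k n)‖ ≤
      (k n : ℝ) * (‖blockA e k n X‖ + ‖blockB e k n X‖) * ‖Y‖ := by
  set D := blockA e k n X ∘L blockB e k n Y - blockA e k n Y ∘L blockB e k n X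
  have hD : finProj ℂ e (blockSet k n) ∘L D = D := by
    simp only [D, ContinuousLinearMap.comp_sub, ← ContinuousLinearMap.comp_assoc,
      ← blockProj_eq_finProj, blockProj_comp_blockA]
  have htrace : ptrace e D (psum k n) = finTrace e (blockSet k n) D := by
    rw [ptrace_eq_finTrace, ← finTrace_finProj_comp e.orthonormal (blockSet_subset_initSet n), hD]
  have hnorm : ‖D‖ ≤ (‖blockA e k n X‖ + ‖blockB e k n X‖) * ‖Y‖ :=
    calc ‖D‖ ≤ ‖blockA e k n X‖ * ‖blockB e k n Y‖ + ‖blockA e k n Y‖ * ‖blockB e k n X‖ :=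
          (norm_sub_le _ _).trans (add_le_add (ContinuousLinearMap.opNorm_comp_le _ _)
            (ContinuousLinearMap.opNorm_comp_le _ _))
      _ ≤ ‖blockA e k n X‖ * ‖Y‖ + ‖Y‖ * ‖blockB e k n X‖ := by
          gcongr
          exacts [norm_blockB_le n Y, norm_blockA_le n Y]
      _ = (‖blockA e k n X‖ + ‖blockB e k n X‖) * ‖Y‖ := by ring
  calc ‖ptrace e D (psum k n)‖ ≤ (blockSet k n).card * ‖D‖ :=
        htrace ▸ norm_finTrace_le _ e.orthonormal D
    _ ≤ k n * ((‖blockA e k n X‖ + ‖blockB e k n X‖) * ‖Y‖) := by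
        rw [card_blockSet hn]
        gcongr
    _ = _ := by ring

end BlockOperators

/-- If `T = CZ - ZC` and at least one of `C, Z` is block tridiagonal with
central block sizes `k n`, then the partial trace of `T` over the first `n` blocks equals the
partial trace of `A n (C) ∘ B n (Z) - A n (Z) ∘ B n (C)`, and is bounded in modulus by
`k n * (‖A n (C)‖ + ‖B n (C)‖) * ‖Z‖`. -/
theorem ptrace_commutator_blockTridiagonal
    (e : HilbertBasis ℕ+ ℂ H) (k : ℕ → ℕ) (hk : ∀ n, 1 ≤ n → 1 ≤ k n)
    (C Z : H →L[ℂ] H)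
    (htri : IsBlockTridiagonal e k C ∨ IsBlockTridiagonal e k Z) :
    ∀ n, 1 ≤ n →
      ptrace e (C ∘L Z - Z ∘L C) (psum k n) =
        ptrace e (blockA e k n C ∘L blockB e k n Z - blockA e k n Z ∘L blockB e k n C)
          (psum k n) ∧
      ‖ptrace e (C ∘L Z - Z ∘L C) (psum k n)‖ ≤
        (k n : ℝ) * (‖blockA e k n C‖ + ‖blockB e k n C‖) * ‖Z‖ := by
  intro n hn
  have heq := ptrace_commutator_eq n hk htri
  exact ⟨heq, heq ▸ norm_ptrace_blockA_comp_blockB_sub_le hn C Z⟩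
end

section
/- Let (k_n)_{n≥1} be a sequence of positive integers with partial sums s_n = k_1 + ⋯ + k_n. If for every nonincreasing sequence (d_j)_{j≥1} of strictly positive real numbers converging to zero one has limsup_{n→∞} (1/k_n)·∑_{j=1}^{s_n} d_j < ∞, then liminf_{n→∞} k_n/s_n > 0. -/
/-!
Suppose the liminf of `k n / s n` vanishes. Along a subsequence `n_i` we then have
`k (n_i) < c_i ^ 2 * s (n_i)` with `c_i = 1 / (i + 1)`. The nonincreasing step function `d` equal
to `c_i` on the block `(s (n_{i-1}), s (n_i)]` tends to zero, yet it is at least `c_i` on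
`[1, s (n_i)]`, so the `i`-th average is at least `s (n_i) * c_i / k (n_i) > 1 / c_i = i + 1`:
the averages are unbounded.
-/

open Filter

open Finset

theorem le_psum {k : ℕ → ℕ} (hk : ∀ n, 1 ≤ n → 1 ≤ k n) (n : ℕ) : n ≤ psum k n :=
  calc n = ∑ _j ∈ Icc 1 n, 1 := by simp
    _ ≤ psum k n := sum_le_sum fun j hj => hk j (mem_Icc.mp hj).1

theorem le_psum_self (k : ℕ → ℕ) {n : ℕ} (hn : 1 ≤ n) : k n ≤ psum k n :=
  single_le_sum (fun _ _ => Nat.zero_le _) (mem_Icc.mpr ⟨hn, le_rfl⟩)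

theorem div_psum_le_one (k : ℕ → ℕ) (n : ℕ) : (k n : ℝ) / psum k n ≤ 1 := by
  rcases Nat.eq_zero_or_pos n with rfl | hn
  · simp [psum]
  · exact div_le_one_of_le₀ (by exact_mod_cast le_psum_self k hn) (Nat.cast_nonneg _)

theorem frequently_div_psum_lt {k : ℕ → ℕ}
    (hL : liminf (fun n => (k n : ℝ) / psum k n) atTop ≤ 0) {ε : ℝ} (hε : 0 < ε) :
    ∃ᶠ n in atTop, (k n : ℝ) / psum k n < ε :=
  frequently_lt_of_liminf_lt (isCoboundedUnder_ge_of_le atTop (div_psum_le_one k))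
    (hL.trans_lt hε)

theorem exists_antitone_tendsto_zero_ge {t : ℕ → ℕ} (ht : ∀ j, ∃ i, j ≤ t i) {c : ℕ → ℝ}
    (hc_pos : ∀ i, 0 < c i) (hc : Antitone c) (hc0 : Tendsto c atTop (nhds 0)) :
    ∃ d : ℕ → ℝ, (∀ j, 0 < d j) ∧ Antitone d ∧ Tendsto d atTop (nhds 0) ∧
      ∀ i j, j ≤ t i → c i ≤ d j := by
  classical
  set idx : ℕ → ℕ := fun j => Nat.find (ht j)
  have idx_mono : Monotone idx := fun _ _ hab => Nat.find_mono fun _ hi => hab.trans hi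
  have idx_tendsto : Tendsto idx atTop atTop := by
    refine tendsto_atTop.2 fun b => eventually_atTop.2 ⟨(range b).sup t + 1, fun j hj => ?_⟩
    by_contra! hlt
    have hj_le : j ≤ t (idx j) := Nat.find_spec (ht j)
    have : t (idx j) ≤ (range b).sup t := le_sup (mem_range.mpr hlt)
    omega
  refine ⟨c ∘ idx, fun j => hc_pos _, hc.comp_monotone idx_mono, hc0.comp idx_tendsto,
    fun i j hj => hc (Nat.find_min' (ht j) hj)⟩

theorem inv_lt_sum_Icc_div_of_div_lt_sq {K S : ℕ} {c : ℝ} {d : ℕ → ℝ} (hK : 0 < K) (hS : 0 < S)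
    (hc : 0 < c) (hKS : (K : ℝ) / S < c ^ 2) (hd : ∀ j ≤ S, c ≤ d j) :
    c⁻¹ < (∑ j ∈ Icc 1 S, d j) / K := by
  have hK' : (0 : ℝ) < K := by exact_mod_cast hK
  have hS' : (0 : ℝ) < S := by exact_mod_cast hS
  have hsum : S * c ≤ ∑ j ∈ Icc 1 S, d j := by
    simpa using card_nsmul_le_sum (Icc 1 S) d c fun j hj => hd j (mem_Icc.mp hj).2
  calc c⁻¹ < S * c / K := by
        rw [div_lt_iff₀ hS'] at hKS
        rw [lt_div_iff₀ hK', inv_mul_eq_div, div_lt_iff₀ hc]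
        nlinarith
    _ ≤ (∑ j ∈ Icc 1 S, d j) / K := by gcongr

/-- If for every nonincreasing strictly positive sequence `(d j)_{j ≥ 1}`
converging to zero one has `limsup (1/k n) * ∑_{j=1}^{s n} d j < ∞` (i.e. these averages are
eventually bounded above), then `liminf k n / s n > 0`. -/
theorem liminf_ratio_pos_of_averages_bounded
    (k : ℕ → ℕ) (hk : ∀ n, 1 ≤ n → 1 ≤ k n)
    (h : ∀ d : ℕ → ℝ, (∀ j, 1 ≤ j → 0 < d j) → (∀ j, 1 ≤ j → d (j + 1) ≤ d j) →
      Filter.Tendsto d atTop (nhds 0) →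
      ∃ M : ℝ, ∀ᶠ n in atTop, (∑ j ∈ Finset.Icc 1 (psum k n), d j) / (k n : ℝ) ≤ M) :
    0 < Filter.liminf (fun n => (k n : ℝ) / (psum k n : ℝ)) atTop := by
  by_contra! hL
  set c : ℕ → ℝ := fun i => 1 / ((i : ℝ) + 1)
  have hc_pos : ∀ i, 0 < c i := fun i => by positivity
  have hc_anti : Antitone c := fun i j hij => by simp only [c]; gcongr
  obtain ⟨φ, hφ, hφ_small⟩ := extraction_forall_of_frequently fun i =>
    ((frequently_div_psum_lt hL (pow_pos (hc_pos i) 2)).and_eventually (eventually_ge_atTop 1))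
  obtain ⟨d, hd_pos, hd_anti, hd0, hd_ge⟩ := exists_antitone_tendsto_zero_ge
    (t := fun i => psum k (φ i)) (fun j => ⟨j, hφ.le_apply.trans (le_psum hk _)⟩)
    hc_pos hc_anti tendsto_one_div_add_atTop_nhds_zero_nat
  obtain ⟨M, hM⟩ := h d (fun j _ => hd_pos j) (fun j _ => hd_anti j.le_succ) hd0
  have h_large : ∀ i : ℕ, (i : ℝ) + 1 < (∑ j ∈ Icc 1 (psum k (φ i)), d j) / k (φ i) := fun i => by
    simpa [c] using inv_lt_sum_Icc_div_of_div_lt_sq (hk _ (hφ_small i).2)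
      ((hφ_small i).2.trans (le_psum hk _)) (hc_pos i) (hφ_small i).1 (hd_ge i)
  obtain ⟨i, hiM, hi_le⟩ := ((tendsto_natCast_atTop_atTop.eventually_gt_atTop M).and
    (hφ.tendsto_atTop.eventually hM)).exists
  linarith [h_large i]
end

section
/- Let r_0, r_1, r_2 be strictly increasing functions from the positive integers to the positive integers whose ranges are pairwise disjoint and whose union is all positive integers, with r_0(1) = 1, and suppose n/r_0(n) → 0 as n → ∞. For each positive integer N let L_N be the number of pairs (i,j) with 1 ≤ i, j ≤ N, i ≤ r_1(j) and j ≤ r_2(i). Then L_N/N² → 1/2 as N → ∞; that is, the staircase form with column support lengths r_1(n) and row support lengths r_2(n) has support density 1/2. -/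
/-!
Since `rₖ n ≥ n`, a pair `(i, j) ∈ [1, N]²` misses the support exactly when `r₁ j < i` or
`r₂ i < j`, and never both. For `i ≤ N + 1`, `rₖ` maps the `j ≤ N` with `rₖ j < i` bijectively
onto the values of `rₖ` in `[1, i)`; as the three ranges partition the positive integers,
counting the complement row by row gives `2 L_N = N² + N + 2 c_N` with
`c_N = Σ_{i ≤ N} #{j ≤ N | r₀ j < i} ≤ N · #{j ≤ N | r₀ j ≤ N}`. The last count is `o(N)`
because `j / r₀ j → 0`.
-/

open Filter Finset Topology

lemma le_apply_of_strictMonoOn_Ici_one {r : ℕ → ℕ} (hr : StrictMonoOn r (Set.Ici 1))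
    (h1 : 1 ≤ r 1) {n : ℕ} (hn : 1 ≤ n) : n ≤ r n := by
  induction n, hn using Nat.le_induction with
  | base => exact h1
  | succ k hk ih => exact ih.trans_lt (hr hk (Set.mem_Ici.2 (by omega)) k.lt_succ_self)

open scoped Classical in
lemma card_filter_apply_lt {r : ℕ → ℕ} (hr : StrictMonoOn r (Set.Ici 1)) (h1 : 1 ≤ r 1)
    {i N : ℕ} (hi : i ≤ N + 1) :
    #{j ∈ Icc 1 N | r j < i} = #{p ∈ Ico 1 i | p ∈ r '' Set.Ici 1} := by
  refine card_nbij r (fun j hj => ?_) (hr.injOn.mono fun j hj => ?_) fun p hp => ?_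
  · simp only [coe_filter, mem_Icc, Set.mem_ofPred_eq, mem_Ico] at hj ⊢
    exact ⟨⟨(hj.1.1).trans (le_apply_of_strictMonoOn_Ici_one hr h1 hj.1.1), hj.2⟩,
      Set.mem_image_of_mem r hj.1.1⟩
  · simp only [coe_filter, mem_Icc, Set.mem_ofPred_eq] at hj
    exact hj.1.1
  · simp only [coe_filter, mem_Ico, Set.mem_ofPred_eq] at hp
    obtain ⟨⟨-, hpi⟩, j, hj : 1 ≤ j, rfl⟩ := hp
    have := le_apply_of_strictMonoOn_Ici_one hr h1 hj
    exact ⟨j, by simp only [coe_filter, mem_Icc, Set.mem_ofPred_eq]; omega, rfl⟩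

lemma card_filter_add_card_filter_add_card_filter {α : Type*} {s : Finset α} {A B C : Set α}
    [DecidablePred (· ∈ A)] [DecidablePred (· ∈ B)] [DecidablePred (· ∈ C)]
    (hAB : Disjoint A B) (hAC : Disjoint A C) (hBC : Disjoint B C) (hcover : ↑s ⊆ A ∪ B ∪ C) :
    #{x ∈ s | x ∈ A} + #{x ∈ s | x ∈ B} + #{x ∈ s | x ∈ C} = #s := by
  rw [card_filter, card_filter, card_filter, card_eq_sum_ones s, ← sum_add_distrib,
    ← sum_add_distrib]
  refine sum_congr rfl fun x hx => ?_
  rcases hcover hx with (hA | hB) | hC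
  · simp [hA, hAB.notMem_of_mem_left hA, hAC.notMem_of_mem_left hA]
  · simp [hB, hAB.notMem_of_mem_right hB, hBC.notMem_of_mem_left hB]
  · simp [hC, hAC.notMem_of_mem_right hC, hBC.notMem_of_mem_right hC]

lemma two_mul_sum_Icc_sub_one (N : ℕ) : 2 * ∑ i ∈ Icc 1 N, (i - 1) = N ^ 2 - N := by
  have h := sum_Ico_add' (fun i => i - 1) 0 N 1
  simp only [zero_add, add_tsub_cancel_right, Ico_add_one_right_eq_Icc, ← range_eq_Ico] at h
  rw [← h, mul_comm, sum_range_id_mul_two, Nat.mul_sub, mul_one, sq]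

lemma card_support_add_sum_card_filter_lt {r1 r2 : ℕ → ℕ}
    (hr1 : ∀ n, 1 ≤ n → n ≤ r1 n) (hr2 : ∀ n, 1 ≤ n → n ≤ r2 n) (N : ℕ) :
    #{p ∈ Icc 1 N ×ˢ Icc 1 N | p.1 ≤ r1 p.2 ∧ p.2 ≤ r2 p.1}
      + ∑ i ∈ Icc 1 N, (#{j ∈ Icc 1 N | r1 j < i} + #{j ∈ Icc 1 N | r2 j < i}) = N ^ 2 := by
  have hswap : ∑ i ∈ Icc 1 N, #{j ∈ Icc 1 N | r2 j < i}
      = ∑ i ∈ Icc 1 N, ∑ j ∈ Icc 1 N, if r2 i < j then 1 else 0 := by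
    simp only [card_filter]
    exact sum_comm
  -- Off the support, exactly one of `r₁ j < i`, `r₂ i < j` holds, as `j ≤ r₁ j` and `i ≤ r₂ i`.
  have hone : ∀ i ∈ Icc 1 N, ∀ j ∈ Icc 1 N,
      (if i ≤ r1 j ∧ j ≤ r2 i then 1 else 0)
        + ((if r1 j < i then 1 else 0) + if r2 i < j then 1 else 0) = 1 := by
    intro i hi j hj
    have := hr1 j (mem_Icc.1 hj).1
    have := hr2 i (mem_Icc.1 hi).1
    split_ifs <;> omega
  rw [sum_add_distrib, hswap, card_filter, sum_product]
  simp only [card_filter, ← sum_add_distrib]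
  rw [sum_congr rfl fun i hi => sum_congr rfl (hone i hi)]
  simp [sq]

open scoped Classical in
lemma card_filter_apply_lt_add_add {r0 r1 r2 : ℕ → ℕ}
    (hmono0 : StrictMonoOn r0 (Set.Ici 1)) (hmono1 : StrictMonoOn r1 (Set.Ici 1))
    (hmono2 : StrictMonoOn r2 (Set.Ici 1)) (h0 : 1 ≤ r0 1) (h1 : 1 ≤ r1 1) (h2 : 1 ≤ r2 1)
    (hdisj : ∀ m n, 1 ≤ m → 1 ≤ n → r0 m ≠ r1 n ∧ r0 m ≠ r2 n ∧ r1 m ≠ r2 n)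
    (hcover : ∀ p, 1 ≤ p →
      (∃ n, 1 ≤ n ∧ r0 n = p) ∨ (∃ n, 1 ≤ n ∧ r1 n = p) ∨ (∃ n, 1 ≤ n ∧ r2 n = p))
    {i N : ℕ} (hi : i ≤ N + 1) :
    #{j ∈ Icc 1 N | r0 j < i} + #{j ∈ Icc 1 N | r1 j < i} + #{j ∈ Icc 1 N | r2 j < i}
      = i - 1 := by
  rw [card_filter_apply_lt hmono0 h0 hi, card_filter_apply_lt hmono1 h1 hi,
    card_filter_apply_lt hmono2 h2 hi, ← Nat.card_Ico 1 i]
  refine card_filter_add_card_filter_add_card_filter ?_ ?_ ?_ fun p hp => ?_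
  · refine Set.disjoint_left.2 ?_
    rintro _ ⟨m, hm, rfl⟩ ⟨n, hn, h⟩
    exact (hdisj m n hm hn).1 h.symm
  · refine Set.disjoint_left.2 ?_
    rintro _ ⟨m, hm, rfl⟩ ⟨n, hn, h⟩
    exact (hdisj m n hm hn).2.1 h.symm
  · refine Set.disjoint_left.2 ?_
    rintro _ ⟨m, hm, rfl⟩ ⟨n, hn, h⟩
    exact (hdisj m n hm hn).2.2 h.symm
  · rcases hcover p (mem_Ico.1 hp).1 with ⟨n, hn, rfl⟩ | ⟨n, hn, rfl⟩ | ⟨n, hn, rfl⟩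
    · exact Or.inl (Or.inl ⟨n, hn, rfl⟩)
    · exact Or.inl (Or.inr ⟨n, hn, rfl⟩)
    · exact Or.inr ⟨n, hn, rfl⟩

lemma two_mul_card_support {r0 r1 r2 : ℕ → ℕ}
    (hmono0 : StrictMonoOn r0 (Set.Ici 1)) (hmono1 : StrictMonoOn r1 (Set.Ici 1))
    (hmono2 : StrictMonoOn r2 (Set.Ici 1)) (h0 : 1 ≤ r0 1) (h1 : 1 ≤ r1 1) (h2 : 1 ≤ r2 1)
    (hdisj : ∀ m n, 1 ≤ m → 1 ≤ n → r0 m ≠ r1 n ∧ r0 m ≠ r2 n ∧ r1 m ≠ r2 n)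
    (hcover : ∀ p, 1 ≤ p →
      (∃ n, 1 ≤ n ∧ r0 n = p) ∨ (∃ n, 1 ≤ n ∧ r1 n = p) ∨ (∃ n, 1 ≤ n ∧ r2 n = p))
    (N : ℕ) :
    2 * #{p ∈ Icc 1 N ×ˢ Icc 1 N | p.1 ≤ r1 p.2 ∧ p.2 ≤ r2 p.1}
      = N ^ 2 + N + 2 * ∑ i ∈ Icc 1 N, #{j ∈ Icc 1 N | r0 j < i} := by
  have hsupport := card_support_add_sum_card_filter_lt
    (fun _ => le_apply_of_strictMonoOn_Ici_one hmono1 h1)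
    (fun _ => le_apply_of_strictMonoOn_Ici_one hmono2 h2) N
  have hrows : ∑ i ∈ Icc 1 N, #{j ∈ Icc 1 N | r0 j < i}
      + ∑ i ∈ Icc 1 N, (#{j ∈ Icc 1 N | r1 j < i} + #{j ∈ Icc 1 N | r2 j < i})
      = ∑ i ∈ Icc 1 N, (i - 1) := by
    rw [← sum_add_distrib]
    refine sum_congr rfl fun i hi => ?_
    rw [← add_assoc]
    exact card_filter_apply_lt_add_add hmono0 hmono1 hmono2 h0 h1 h2 hdisj hcover
      (by have := (mem_Icc.1 hi).2; omega)
  have := two_mul_sum_Icc_sub_one N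
  have := Nat.le_self_pow two_ne_zero N
  omega

lemma sum_card_filter_apply_lt_le (r : ℕ → ℕ) (N : ℕ) :
    ∑ i ∈ Icc 1 N, #{j ∈ Icc 1 N | r j < i} ≤ N * #{j ∈ Icc 1 N | r j ≤ N} := by
  refine (sum_le_card_nsmul _ _ #{j ∈ Icc 1 N | r j ≤ N} fun i hi => ?_).trans (by simp)
  exact card_le_card <| monotone_filter_right _ fun j _ (h : r j < i) => by
    have := (mem_Icc.1 hi).2; omega

lemma tendsto_card_filter_apply_le_div {r : ℕ → ℕ} (hpos : ∀ n, 1 ≤ n → 0 < r n)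
    (h : Tendsto (fun n : ℕ => (n : ℝ) / r n) atTop (𝓝 0)) :
    Tendsto (fun N : ℕ => (#{j ∈ Icc 1 N | r j ≤ N} : ℝ) / N) atTop (𝓝 0) := by
  refine tendsto_order.2 ⟨fun a ha => Eventually.of_forall fun N => ha.trans_le (by positivity),
    fun ε hε => ?_⟩
  obtain ⟨M, hM⟩ := eventually_atTop.1 ((tendsto_order.1 h).2 (ε / 2) (half_pos hε))
  have hcard : ∀ N : ℕ, (#{j ∈ Icc 1 N | r j ≤ N} : ℝ) ≤ M + ε / 2 * N := by
    intro N
    have hsub : {j ∈ Icc 1 N | r j ≤ N} ⊆ range M ∪ Icc 1 ⌊ε / 2 * N⌋₊ := by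
      intro j hj
      rw [mem_filter, mem_Icc] at hj
      rw [mem_union, mem_range, mem_Icc]
      refine (lt_or_ge j M).imp id fun hjM => ⟨hj.1.1, Nat.le_floor ?_⟩
      have hr : (0 : ℝ) < r j := by exact_mod_cast hpos j hj.1.1
      calc (j : ℝ) ≤ ε / 2 * r j := ((div_lt_iff₀ hr).1 (hM j hjM)).le
        _ ≤ ε / 2 * N := by gcongr; exact_mod_cast hj.2
    calc (#{j ∈ Icc 1 N | r j ≤ N} : ℝ) ≤ #(range M ∪ Icc 1 ⌊ε / 2 * N⌋₊) := by
          exact_mod_cast card_le_card hsub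
      _ ≤ M + ⌊ε / 2 * N⌋₊ := by exact_mod_cast (card_union_le _ _).trans (by simp)
      _ ≤ M + ε / 2 * N := by gcongr; exact Nat.floor_le (by positivity)
  filter_upwards [(tendsto_natCast_atTop_atTop.const_mul_atTop (half_pos hε)).eventually_gt_atTop
    (M : ℝ)] with N hN
  have hN : (0 : ℝ) < N := by nlinarith [(M.cast_nonneg : (0 : ℝ) ≤ M)]
  rw [div_lt_iff₀ hN]
  linarith [hcard N]

theorem staircase_density_one_half_general
    (r0 r1 r2 : ℕ → ℕ)
    (hmono0 : ∀ m n, 1 ≤ m → m < n → r0 m < r0 n)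
    (hmono1 : ∀ m n, 1 ≤ m → m < n → r1 m < r1 n)
    (hmono2 : ∀ m n, 1 ≤ m → m < n → r2 m < r2 n)
    (hpos : ∀ n, 1 ≤ n → 1 ≤ r0 n ∧ 1 ≤ r1 n ∧ 1 ≤ r2 n)
    (hdisj : ∀ m n, 1 ≤ m → 1 ≤ n → r0 m ≠ r1 n ∧ r0 m ≠ r2 n ∧ r1 m ≠ r2 n)
    (hcover : ∀ p, 1 ≤ p →
      (∃ n, 1 ≤ n ∧ r0 n = p) ∨ (∃ n, 1 ≤ n ∧ r1 n = p) ∨ (∃ n, 1 ≤ n ∧ r2 n = p))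
    (hratio : Tendsto (fun n : ℕ => (n : ℝ) / (r0 n : ℝ)) atTop (nhds 0)) :
    Tendsto (fun N : ℕ =>
        (((Finset.Icc 1 N ×ˢ Finset.Icc 1 N).filter
          (fun p : ℕ × ℕ => p.1 ≤ r1 p.2 ∧ p.2 ≤ r2 p.1)).card : ℝ) / (N : ℝ) ^ 2)
      atTop (nhds (1 / 2)) := by
  have hstrict (r : ℕ → ℕ) (h : ∀ m n, 1 ≤ m → m < n → r m < r n) :
      StrictMonoOn r (Set.Ici 1) := fun m hm n _ hmn => h m n hm hmn
  obtain ⟨h0, h1, h2⟩ := hpos 1 le_rfl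
  have hcount := two_mul_card_support (hstrict r0 hmono0) (hstrict r1 hmono1)
    (hstrict r2 hmono2) h0 h1 h2 hdisj hcover
  set c : ℕ → ℕ := fun N => ∑ i ∈ Icc 1 N, #{j ∈ Icc 1 N | r0 j < i}
  have hc : Tendsto (fun N : ℕ => (c N : ℝ) / N ^ 2) atTop (𝓝 0) := by
    refine squeeze_zero (fun N => by positivity) (fun N => ?_)
      (tendsto_card_filter_apply_le_div (fun n hn => (hpos n hn).1) hratio)
    calc (c N : ℝ) / N ^ 2 ≤ (N * #{j ∈ Icc 1 N | r0 j ≤ N} : ℝ) / N ^ 2 := by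
          gcongr; exact_mod_cast sum_card_filter_apply_lt_le r0 N
      _ = (#{j ∈ Icc 1 N | r0 j ≤ N} : ℝ) / N := by
          rcases eq_or_ne (N : ℝ) 0 with hN | hN
          · simp [hN]
          · rw [sq, mul_div_mul_left _ _ hN]
  have hlim :=
    ((tendsto_one_div_atTop_nhds_zero_nat.const_mul (1 / 2 : ℝ)).const_add (1 / 2)).add hc
  rw [mul_zero, add_zero, add_zero] at hlim
  refine hlim.congr' ((eventually_ge_atTop 1).mono fun N hN => ?_)
  have hcountR : 2 * (#{p ∈ Icc 1 N ×ˢ Icc 1 N | p.1 ≤ r1 p.2 ∧ p.2 ≤ r2 p.1} : ℝ)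
      = N ^ 2 + N + 2 * c N := by exact_mod_cast hcount N
  field_simp
  linarith

/-- Let `r0, r1, r2` be strictly increasing functions on the positive
integers with pairwise disjoint ranges covering all positive integers, `r0 1 = 1`, and
`n / r0 n → 0`.  Let `L N` be the number of pairs `(i, j)` with `1 ≤ i, j ≤ N`, `i ≤ r1 j`
and `j ≤ r2 i`.  Then `L N / N² → 1/2`: the staircase form with column support lengths `r1 n`
and row support lengths `r2 n` has support density `1/2`. -/
theorem staircase_density_one_half
    (r0 r1 r2 : ℕ → ℕ)
    (hmono0 : ∀ m n, 1 ≤ m → m < n → r0 m < r0 n)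
    (hmono1 : ∀ m n, 1 ≤ m → m < n → r1 m < r1 n)
    (hmono2 : ∀ m n, 1 ≤ m → m < n → r2 m < r2 n)
    (hpos : ∀ n, 1 ≤ n → 1 ≤ r0 n ∧ 1 ≤ r1 n ∧ 1 ≤ r2 n)
    (hdisj : ∀ m n, 1 ≤ m → 1 ≤ n → r0 m ≠ r1 n ∧ r0 m ≠ r2 n ∧ r1 m ≠ r2 n)
    (hcover : ∀ p, 1 ≤ p →
      (∃ n, 1 ≤ n ∧ r0 n = p) ∨ (∃ n, 1 ≤ n ∧ r1 n = p) ∨ (∃ n, 1 ≤ n ∧ r2 n = p))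
    (hr01 : r0 1 = 1)
    (hratio : Tendsto (fun n : ℕ => (n : ℝ) / (r0 n : ℝ)) atTop (nhds 0)) :
    Tendsto (fun N : ℕ =>
        (((Finset.Icc 1 N ×ˢ Finset.Icc 1 N).filter
          (fun p : ℕ × ℕ => p.1 ≤ r1 p.2 ∧ p.2 ≤ r2 p.1)).card : ℝ) / (N : ℝ) ^ 2)
      atTop (nhds (1 / 2)) :=
  staircase_density_one_half_general r0 r1 r2 hmono0 hmono1 hmono2 hpos hdisj hcover hratio
end

section
/- Let S be a set of pairs of positive integers (a matrix form's set of support entries), let (m_k)_{k≥1} be a strictly increasing sequence of positive integers, and let δ be a real number such that (#{(a,b) : 1 ≤ a,b ≤ k, (m_a, m_b) ∈ S})/k² → δ as k → ∞. Then there exists a bijection π of the positive integers such that (#{(i,j) : 1 ≤ i,j ≤ N, (π(i), π(j)) ∈ S})/N² → δ as N → ∞. -/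
/-!
Take `π` equal to `m` off the squares and let it map the squares bijectively onto the rest of
`ℕ+`; this is possible because both sets are infinite. In the `N × N` box the two counts then
differ only on rows or columns indexed by squares, at most `2 N √N` entries, which is `o(N²)`.
-/

open Filter Topology Set

noncomputable def supportCount (S : Set (ℕ+ × ℕ+)) (f : ℕ+ → ℕ+) (N : ℕ) : ℕ :=
  Set.ncard {p : ℕ+ × ℕ+ | (p.1 : ℕ) ≤ N ∧ (p.2 : ℕ) ≤ N ∧ (f p.1, f p.2) ∈ S}

namespace PNat

lemma setOf_coe_le_eq_preimage (N : ℕ) :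
    {i : ℕ+ | (i : ℕ) ≤ N} = PNat.val ⁻¹' Icc 1 N := by
  ext i
  exact ⟨fun h => ⟨i.pos, h⟩, And.right⟩

lemma ncard_setOf_coe_le (N : ℕ) : {i : ℕ+ | (i : ℕ) ≤ N}.ncard = N := by
  rw [setOf_coe_le_eq_preimage, ncard_preimage_of_injective_subset_range coe_injective]
  · simp
  · exact fun n hn => ⟨⟨n, hn.1⟩, rfl⟩

lemma finite_setOf_coe_le (N : ℕ) : {i : ℕ+ | (i : ℕ) ≤ N}.Finite := by
  rw [setOf_coe_le_eq_preimage]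
  exact (finite_Icc 1 N).preimage coe_injective.injOn

end PNat

lemma Equiv.exists_eqOn_compl_of_injective {α : Type*} [Countable α] {m : α → α}
    (hm : Function.Injective m) {Z : Set α} (hZ : Z.Infinite) : ∃ π : α ≃ α, EqOn π m Zᶜ := by
  classical
  have : Infinite ↥(Zᶜ)ᶜ := by rwa [compl_compl, infinite_coe_iff]
  have : Infinite ↥(m '' Zᶜ)ᶜ :=
    infinite_coe_iff.2 ((hZ.image hm.injOn).mono (by simpa using image_compl_subset hm (s := Zᶜ)))
  obtain ⟨f⟩ : Nonempty (↥(Zᶜ)ᶜ ≃ ↥(m '' Zᶜ)ᶜ) := nonempty_equiv_of_countable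
  refine ⟨Equiv.subtypeCongr (Equiv.Set.image m Zᶜ hm) f, fun x hx => ?_⟩
  simp [Equiv.subtypeCongr, Equiv.sumCompl_symm_apply_of_pos hx]

section Perturbation

variable {S : Set (ℕ+ × ℕ+)} {f g : ℕ+ → ℕ+} {Z : Set ℕ+}

lemma supportCount_le_add_of_eqOn_compl (hfg : EqOn f g Zᶜ) (N : ℕ) :
    supportCount S f N ≤ supportCount S g N + 2 * N * {i ∈ Z | (i : ℕ) ≤ N}.ncard := by
  set I := {i : ℕ+ | (i : ℕ) ≤ N}
  set Z' := {i ∈ Z | (i : ℕ) ≤ N}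
  have hI : I.Finite := PNat.finite_setOf_coe_le N
  have hZ' : Z'.Finite := hI.subset fun i hi => hi.2
  have hsub : {p : ℕ+ × ℕ+ | (p.1 : ℕ) ≤ N ∧ (p.2 : ℕ) ≤ N ∧ (f p.1, f p.2) ∈ S} ⊆
      {p | (p.1 : ℕ) ≤ N ∧ (p.2 : ℕ) ≤ N ∧ (g p.1, g p.2) ∈ S} ∪ (Z' ×ˢ I ∪ I ×ˢ Z') := by
    rintro ⟨i, j⟩ ⟨hi, hj, hS⟩
    by_cases hiZ : i ∈ Z
    · exact Or.inr (Or.inl ⟨⟨hiZ, hi⟩, hj⟩)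
    by_cases hjZ : j ∈ Z
    · exact Or.inr (Or.inr ⟨hi, hjZ, hj⟩)
    exact Or.inl ⟨hi, hj, by rwa [← hfg hiZ, ← hfg hjZ]⟩
  have hfin : ({p : ℕ+ × ℕ+ | (p.1 : ℕ) ≤ N ∧ (p.2 : ℕ) ≤ N ∧ (g p.1, g p.2) ∈ S} ∪
      (Z' ×ˢ I ∪ I ×ˢ Z')).Finite :=
    ((hI.prod hI).subset fun p hp => ⟨hp.1, hp.2.1⟩).union ((hZ'.prod hI).union (hI.prod hZ'))
  calc supportCount S f N ≤ _ := ncard_le_ncard hsub hfin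
    _ ≤ supportCount S g N + ((Z' ×ˢ I).ncard + (I ×ˢ Z').ncard) :=
      (ncard_union_le _ _).trans (Nat.add_le_add_left (ncard_union_le _ _) _)
    _ = supportCount S g N + 2 * N * Z'.ncard := by
      rw [ncard_prod, ncard_prod, PNat.ncard_setOf_coe_le]; ring

lemma tendsto_supportCount_div_sq_of_eqOn_compl {δ : ℝ} (hfg : EqOn f g Zᶜ)
    (hZ : Tendsto (fun N : ℕ => ({i ∈ Z | (i : ℕ) ≤ N}.ncard : ℝ) / N) atTop (𝓝 0))
    (hg : Tendsto (fun N : ℕ => (supportCount S g N : ℝ) / N ^ 2) atTop (𝓝 δ)) :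
    Tendsto (fun N : ℕ => (supportCount S f N : ℝ) / N ^ 2) atTop (𝓝 δ) := by
  refine hg.congr_dist (squeeze_zero (fun _ => dist_nonneg) (fun N => ?_)
    (by simpa using hZ.const_mul 2))
  rcases N.eq_zero_or_pos with rfl | hN
  · simp
  have hcast (a b : ℕ) (h : a ≤ b + 2 * N * {i ∈ Z | (i : ℕ) ≤ N}.ncard) :
      (a : ℝ) - b ≤ 2 * N * {i ∈ Z | (i : ℕ) ≤ N}.ncard := by
    rw [sub_le_iff_le_add']; exact_mod_cast h
  have hdiff : |(supportCount S g N : ℝ) - supportCount S f N| ≤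
      2 * N * {i ∈ Z | (i : ℕ) ≤ N}.ncard :=
    abs_sub_le_iff.2 ⟨hcast _ _ (supportCount_le_add_of_eqOn_compl hfg.symm N),
      hcast _ _ (supportCount_le_add_of_eqOn_compl hfg N)⟩
  calc dist _ _ = |(supportCount S g N : ℝ) - supportCount S f N| / N ^ 2 := by
        rw [Real.dist_eq, ← sub_div, abs_div, abs_of_nonneg (sq_nonneg (N : ℝ))]
    _ ≤ 2 * N * {i ∈ Z | (i : ℕ) ≤ N}.ncard / N ^ 2 := by gcongr
    _ = 2 * ({i ∈ Z | (i : ℕ) ≤ N}.ncard / N) := by field_simp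

end Perturbation

namespace PNat

def squares : Set ℕ+ := range fun t => t * t

lemma squares_infinite : squares.Infinite :=
  infinite_range_of_injective (strictMono_id.mul' strictMono_id).injective

lemma ncard_squares_le (N : ℕ) : {i ∈ squares | (i : ℕ) ≤ N}.ncard ≤ N.sqrt := by
  have hsub : {i ∈ squares | (i : ℕ) ≤ N} ⊆ (fun t => t * t) '' {t : ℕ+ | (t : ℕ) ≤ N.sqrt} := by
    rintro _ ⟨⟨t, rfl⟩, ht⟩
    exact ⟨t, Nat.le_sqrt.2 ht, rfl⟩
  calc _ ≤ _ := ncard_le_ncard hsub ((finite_setOf_coe_le _).image _)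
    _ ≤ _ := ncard_image_le (finite_setOf_coe_le _)
    _ = N.sqrt := ncard_setOf_coe_le _

lemma tendsto_ncard_squares_div :
    Tendsto (fun N : ℕ => ({i ∈ squares | (i : ℕ) ≤ N}.ncard : ℝ) / N) atTop (𝓝 0) := by
  refine squeeze_zero (fun _ => by positivity) (fun N => ?_)
    (tendsto_inv_atTop_zero.comp (Real.tendsto_sqrt_atTop.comp tendsto_natCast_atTop_atTop))
  calc _ ≤ √(N : ℝ) / N := by
        gcongr
        exact (Nat.cast_le.2 (ncard_squares_le N)).trans Real.nat_sqrt_le_real_sqrt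
    _ = (√(N : ℝ))⁻¹ := by rw [Real.sqrt_div_self]

end PNat

/-- Let `S` be a set of pairs of positive integers (the support entries of
a matrix form), and let `(m k)_{k ≥ 1}` be a strictly increasing sequence of positive
integers such that the density of `S` along the subsequence `(m k)`,
`#{(a, b) : 1 ≤ a, b ≤ k, (m a, m b) ∈ S} / k²`, tends to `δ`.  Then there is a bijection `π`
of the positive integers relative to which `S` has support density `δ`. -/
theorem density_of_permuted_form
    (S : Set (ℕ+ × ℕ+)) (m : ℕ+ → ℕ+) (hm : StrictMono m) (δ : ℝ)
    (hδ : Tendsto (fun k : ℕ =>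
        ((Set.ncard {p : ℕ+ × ℕ+ | (p.1 : ℕ) ≤ k ∧ (p.2 : ℕ) ≤ k ∧ (m p.1, m p.2) ∈ S}) : ℝ)
          / (k : ℝ) ^ 2)
      atTop (nhds δ)) :
    ∃ π : ℕ+ ≃ ℕ+,
      Tendsto (fun N : ℕ =>
        ((Set.ncard {p : ℕ+ × ℕ+ | (p.1 : ℕ) ≤ N ∧ (p.2 : ℕ) ≤ N ∧ (π p.1, π p.2) ∈ S}) : ℝ)
          / (N : ℝ) ^ 2)
      atTop (nhds δ) := by
  obtain ⟨π, hπ⟩ := Equiv.exists_eqOn_compl_of_injective hm.injective PNat.squares_infinite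
  exact ⟨π, tendsto_supportCount_div_sq_of_eqOn_compl hπ PNat.tendsto_ncard_squares_div hδ⟩
end

section
/- For every bounded operator T on H there exists a Hilbert (orthonormal) basis (f_n)_{n≥1} of H such that (#{(i,j) : 1 ≤ i,j ≤ N, ⟨f_i, T f_j⟩ ≠ 0})/N² → 0 as N → ∞; that is, every bounded operator has an orthonormal basis in which its matrix has support density 0. -/
/-!
Build an orthonormal sequence `v` one vector at a time in the infinite-dimensional space. At a
square index `k²` the new vector is chosen so that the `k`-th term of a dense sequence lies in the
span of what has been built, which makes `v` total. At every other index `n` the new vector is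
chosen orthogonal to `v m`, `T (v m)` and `T† (v m)` for all `m < n`, which kills the entries
`⟪v m, T (v n)⟫` and `⟪v n, T (v m)⟫`. So the only nonzero entries lie on the diagonal or in a
square row or column, and there are `O(N^{3/2})` of those in the `N × N` corner.
-/

open Filter Finset Submodule Topology
open scoped InnerProductSpace

theorem exists_seq_forall_of_exists_next {α : Type*} (P : ∀ n : ℕ, (Fin n → α) → α → Prop)
    (h : ∀ n g, ∃ x, P n g x) : ∃ f : ℕ → α, ∀ n, P n (fun i ↦ f i) (f n) := by
  choose F hF using h
  refine ⟨Nat.strongRec fun n ih ↦ F n fun i ↦ ih i i.2, fun n ↦ ?_⟩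
  beta_reduce
  rw [Nat.strongRec_eq]
  exact hF _ _

section Construction

open Set

variable {𝕜 E : Type*} [RCLike 𝕜] [NormedAddCommGroup E] [InnerProductSpace 𝕜 E]

theorem Submodule.exists_norm_eq_one_mem_span_singleton {K : Submodule 𝕜 E} (hK : K ≠ ⊥)
    {w : E} (hw : w ∈ K) : ∃ x ∈ K, ‖x‖ = 1 ∧ w ∈ 𝕜 ∙ x := by
  obtain ⟨y, hyK, hy0, hwy⟩ : ∃ y ∈ K, y ≠ 0 ∧ w ∈ 𝕜 ∙ y := by
    by_cases hw0 : w = 0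
    · obtain ⟨y, hyK, hy0⟩ := K.ne_bot_iff.mp hK
      exact ⟨y, hyK, hy0, hw0 ▸ zero_mem _⟩
    · exact ⟨w, hw, hw0, mem_span_singleton_self w⟩
  refine ⟨(‖y‖⁻¹ : 𝕜) • y, K.smul_mem _ hyK, norm_smul_inv_norm hy0, ?_⟩
  rwa [span_singleton_smul_eq (IsUnit.mk0 _ (by simpa using hy0))]

theorem exists_norm_eq_one_inner_eq_zero_mem_span_insert (hinf : ¬ FiniteDimensional 𝕜 E)
    {A : Set E} (hA : A.Finite) (u : E) :
    ∃ x, ‖x‖ = 1 ∧ (∀ a ∈ A, ⟪a, x⟫_𝕜 = 0) ∧ u ∈ span 𝕜 (insert x A) := by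
  set K := span 𝕜 A
  have : FiniteDimensional 𝕜 K := FiniteDimensional.span_of_finite 𝕜 hA
  have hK : Kᗮ ≠ ⊥ := fun h ↦ hinf <| by
    rw [orthogonal_eq_bot_iff.mp h] at this
    exact topEquiv.finiteDimensional
  obtain ⟨x, hxK, hx1, hux⟩ :=
    exists_norm_eq_one_mem_span_singleton hK (K.sub_starProjection_mem_orthogonal u)
  refine ⟨x, hx1, fun a ha ↦ (mem_orthogonal _ _).mp hxK a (subset_span ha), ?_⟩
  rw [← sub_add_cancel u (K.starProjection u)]
  exact add_mem (span_mono (singleton_subset_iff.mpr (mem_insert x A)) hux)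
    (span_mono (subset_insert x A) (K.starProjection_apply_mem u))

open ContinuousLinearMap in
theorem exists_orthonormal_inner_apply_eq_zero [CompleteSpace E] (hinf : ¬ FiniteDimensional 𝕜 E)
    (T : E →L[𝕜] E) (S : Set ℕ) (u : ℕ → E) :
    ∃ v : ℕ → E, Orthonormal 𝕜 v ∧ (∀ n ∈ S, u n ∈ span 𝕜 (range v)) ∧
      ∀ i j, i ≠ j → i ∉ S → j ∉ S → ⟪v i, T (v j)⟫_𝕜 = 0 := by
  obtain ⟨v, hv⟩ := exists_seq_forall_of_exists_next
    (fun n (g : Fin n → E) x ↦ ‖x‖ = 1 ∧ (∀ i, ⟪g i, x⟫_𝕜 = 0) ∧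
      (n ∈ S → u n ∈ span 𝕜 (insert x (range g))) ∧
      (n ∉ S → ∀ i, ⟪adjoint T (g i), x⟫_𝕜 = 0 ∧ ⟪T (g i), x⟫_𝕜 = 0)) fun n g ↦ by
    by_cases hn : n ∈ S
    · obtain ⟨x, hx1, hxg, hux⟩ :=
        exists_norm_eq_one_inner_eq_zero_mem_span_insert hinf (finite_range g) (u n)
      exact ⟨x, hx1, fun i ↦ hxg _ (mem_range_self i), fun _ ↦ hux, absurd hn⟩
    · obtain ⟨x, hx1, hx, -⟩ := exists_norm_eq_one_inner_eq_zero_mem_span_insert hinf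
        ((finite_range g).union ((finite_range (adjoint T ∘ g)).union (finite_range (T ∘ g)))) 0
      exact ⟨x, hx1, fun i ↦ hx _ (.inl (mem_range_self i)), (absurd · hn),
        fun _ i ↦ ⟨hx _ (.inr (.inl (mem_range_self i))), hx _ (.inr (.inr (mem_range_self i)))⟩⟩
  have hlt : ∀ m n, m < n → ⟪v m, v n⟫_𝕜 = 0 := fun m n h ↦ (hv n).2.1 ⟨m, h⟩
  refine ⟨v, ⟨fun n ↦ (hv n).1, fun i j hij ↦ ?_⟩, fun n hn ↦ ?_, fun i j hij hi hj ↦ ?_⟩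
  · rcases hij.lt_or_gt with h | h
    · exact hlt i j h
    · exact inner_eq_zero_symm.mp (hlt j i h)
  · exact span_mono (insert_subset (mem_range_self n) (range_comp_subset_range _ v))
      ((hv n).2.2.1 hn)
  · rcases hij.lt_or_gt with h | h
    · rw [← adjoint_inner_left]
      exact ((hv j).2.2.2 hj ⟨i, h⟩).1
    · exact inner_eq_zero_symm.mp ((hv i).2.2.2 hi ⟨j, h⟩).2

end Construction

theorem card_filter_eq_or_or_le {ι : Type*} [DecidableEq ι] (s : Finset ι) (p : ι → Prop)
    [DecidablePred p] :
    #{q ∈ s ×ˢ s | q.1 = q.2 ∨ p q.1 ∨ p q.2} ≤ #s + 2 * (#s * #{i ∈ s | p i}) :=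
  calc #{q ∈ s ×ˢ s | q.1 = q.2 ∨ p q.1 ∨ p q.2}
      ≤ #(s.diag ∪ ({i ∈ s | p i} ×ˢ s ∪ s ×ˢ {i ∈ s | p i})) := by
        refine card_le_card fun q hq ↦ ?_
        simp only [mem_filter, mem_product] at hq
        simp only [mem_union, mem_diag, mem_product, mem_filter]
        tauto
    _ ≤ #s.diag + (#({i ∈ s | p i} ×ˢ s) + #(s ×ˢ {i ∈ s | p i})) :=
        (card_union_le _ _).trans (Nat.add_le_add_left (card_union_le _ _) _)
    _ = #s + 2 * (#s * #{i ∈ s | p i}) := by rw [diag_card, card_product, card_product]; ring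

theorem tendsto_card_filter_eq_or_or_div_sq {p : ℕ → Prop} [DecidablePred p]
    (hp : Tendsto (fun N : ℕ ↦ (#{n ∈ range N | p n} : ℝ) / N) atTop (𝓝 0)) :
    Tendsto (fun N : ℕ ↦ (#{q ∈ range N ×ˢ range N | q.1 = q.2 ∨ p q.1 ∨ p q.2} : ℝ) / N ^ 2)
      atTop (𝓝 0) := by
  have hlim : Tendsto (fun N : ℕ ↦ (N : ℝ)⁻¹ + 2 * ((#{n ∈ range N | p n} : ℝ) / N)) atTop
      (𝓝 0) := by
    simpa using tendsto_inv_atTop_nhds_zero_nat.add (hp.const_mul 2)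
  refine squeeze_zero (fun N ↦ by positivity) (fun N ↦ ?_) hlim
  rcases N.eq_zero_or_pos with rfl | hN
  · simp
  calc _ ≤ ((N + 2 * (N * #{n ∈ range N | p n}) : ℕ) : ℝ) / N ^ 2 := by
        gcongr
        simpa using card_filter_eq_or_or_le (range N) p
    _ = _ := by field_simp; push_cast; ring

theorem card_filter_isSquare_range_le (N : ℕ) : #{n ∈ range N | IsSquare n} ≤ N.sqrt + 1 :=
  calc #{n ∈ range N | IsSquare n} ≤ #((range (N.sqrt + 1)).image fun k ↦ k * k) := by
        refine card_le_card fun n hn ↦ ?_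
        obtain ⟨hnN, k, rfl⟩ := mem_filter.mp hn
        exact mem_image.mpr ⟨k, mem_range.mpr
          (Nat.lt_succ_of_le (Nat.le_sqrt.mpr (mem_range.mp hnN).le)), rfl⟩
    _ ≤ N.sqrt + 1 := card_image_le.trans (card_range _).le

theorem tendsto_card_filter_isSquare_div :
    Tendsto (fun N : ℕ ↦ (#{n ∈ range N | IsSquare n} : ℝ) / N) atTop (𝓝 0) := by
  have hlim : Tendsto (fun N : ℕ ↦ (√(N : ℝ))⁻¹ + (N : ℝ)⁻¹) atTop (𝓝 0) := by
    simpa using (tendsto_inv_atTop_zero.comp (Real.tendsto_sqrt_atTop.comp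
      tendsto_natCast_atTop_atTop)).add tendsto_inv_atTop_nhds_zero_nat
  refine squeeze_zero (fun N ↦ by positivity) (fun N ↦ ?_) hlim
  calc _ ≤ (√(N : ℝ) + 1) / N := by
        gcongr
        calc (#{n ∈ range N | IsSquare n} : ℝ) ≤ (N.sqrt + 1 : ℕ) :=
              Nat.cast_le.mpr (card_filter_isSquare_range_le N)
          _ ≤ √(N : ℝ) + 1 := by push_cast; gcongr; exact Real.nat_sqrt_le_real_sqrt
    _ = _ := by rw [add_div, Real.sqrt_div_self', one_div, one_div]

theorem ncard_pnat_le_card_filter {M : Type*} [Zero M] {a : ℕ → ℕ → M} {p : ℕ → Prop}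
    [DecidablePred p] (ha : ∀ i j, i ≠ j → ¬ p i → ¬ p j → a i j = 0) (N : ℕ) :
    {q : ℕ+ × ℕ+ | (q.1 : ℕ) ≤ N ∧ (q.2 : ℕ) ≤ N ∧ a q.1.natPred q.2.natPred ≠ 0}.ncard ≤
      #{q ∈ range N ×ˢ range N | q.1 = q.2 ∨ p q.1 ∨ p q.2} := by
  rw [← Set.ncard_coe_finset, ← Set.ncard_image_of_injective _
    (PNat.natPred_injective.prodMap PNat.natPred_injective)]
  refine Set.ncard_le_ncard ?_ (Finset.finite_toSet _)
  rintro _ ⟨q, ⟨h1, h2, hq⟩, rfl⟩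
  have := q.1.natPred_add_one
  have := q.2.natPred_add_one
  simp only [coe_filter, mem_product, Finset.mem_range, Set.mem_ofPred_eq, Prod.map]
  refine ⟨⟨by omega, by omega⟩, ?_⟩
  by_contra! h
  exact hq (ha _ _ h.1 h.2.1 h.2.2)

/-- Every bounded operator `T` on a separable infinite-dimensional complex
Hilbert space admits an orthonormal basis `(f n)_{n ≥ 1}` relative to which its matrix
`(⟪f i, T (f j)⟫)` has support density `0`. -/
theorem exists_basis_density_zero
    {H : Type*} [NormedAddCommGroup H] [InnerProductSpace ℂ H] [CompleteSpace H]
    [TopologicalSpace.SeparableSpace H] (hinf : ¬ FiniteDimensional ℂ H)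
    (T : H →L[ℂ] H) :
    ∃ f : HilbertBasis ℕ+ ℂ H,
      Tendsto (fun N : ℕ =>
        ((Set.ncard {p : ℕ+ × ℕ+ | (p.1 : ℕ) ≤ N ∧ (p.2 : ℕ) ≤ N ∧
            (inner ℂ (f p.1) (T (f p.2)) : ℂ) ≠ 0}) : ℝ) / (N : ℝ) ^ 2)
      atTop (nhds 0) := by
  obtain ⟨e, he⟩ := TopologicalSpace.exists_dense_seq H
  obtain ⟨v, hv, hspan, hzero⟩ :=
    exists_orthonormal_inner_apply_eq_zero hinf T {n | IsSquare n} (fun n ↦ e n.sqrt)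
  have htotal : ⊤ ≤ (span ℂ (Set.range (v ∘ PNat.natPred))).topologicalClosure := by
    rw [Function.Surjective.range_comp (fun n ↦ ⟨n.succPNat, Nat.natPred_succPNat n⟩)]
    refine (dense_iff_topologicalClosure_eq_top.mp (he.mono ?_)).ge
    rintro _ ⟨k, rfl⟩
    simpa using hspan (k * k) ⟨k, rfl⟩
  refine ⟨HilbertBasis.mk (hv.comp _ PNat.natPred_injective) htotal, ?_⟩
  simp only [HilbertBasis.coe_mk, Function.comp_apply]
  exact squeeze_zero (fun N ↦ by positivity)
    (fun N ↦ by gcongr; exact_mod_cast ncard_pnat_le_card_filter hzero N)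
    (tendsto_card_filter_eq_or_or_div_sq tendsto_card_filter_isSquare_div)
end

section
/- For a bounded operator W on H and n ≥ 1, let s_n(W) = inf{ ‖W − F‖ : F a bounded operator on H whose range is finite-dimensional of dimension < n } denote the n-th s-number of W. Let k ≥ 1 and let C_1, …, C_k and Z_1, …, Z_k be compact operators on H, and set T = ∑_{i=1}^k C_i∘Z_i. Then for every m ≥ 1, s_m(T) ≤ ∑_{i=1}^k s_{⌈m/(2k)⌉}(C_i)·s_{⌈m/(2k)⌉}(Z_i). In particular, if T = C∘Z − Z∘C for compact operators C, Z, then s_m(T) ≤ 2·s_{⌈m/4⌉}(C)·s_{⌈m/4⌉}(Z) for every m ≥ 1. -/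
/-- The `n`-th s-number of a bounded operator `W`:
`s n (W) = inf {‖W - F‖ : F bounded with finite-dimensional range of dimension < n}`. -/
noncomputable def sNum {H : Type*} [NormedAddCommGroup H] [InnerProductSpace ℂ H]
    (W : H →L[ℂ] H) (n : ℕ) : ℝ :=
  sInf {r : ℝ | ∃ F : H →L[ℂ] H, FiniteDimensional ℂ (LinearMap.range (F : H →ₗ[ℂ] H)) ∧
    Module.finrank ℂ (LinearMap.range (F : H →ₗ[ℂ] H)) < n ∧ r = ‖W - F‖}

/-! The s-numbers satisfy the index-shifted Ky Fan inequalities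
`s_{m+n+1}(A + B) ≤ s_{m+1}(A) + s_{n+1}(B)` and `s_{m+n+1}(AB) ≤ s_{m+1}(A) s_{n+1}(B)`.
The first holds because ranks add; for the second, if `F`, `G` approximate `A`, `B` with ranks
`≤ m`, `≤ n`, then `FB + (A - F)G` has rank `≤ m + n` and `AB - (FB + (A - F)G) = (A - F)(B - G)`.
Iterating over the `k` summands, each `Cᵢ Zᵢ` with indices `r + 1 = ⌈m/(2k)⌉` contributes `2r` to
the rank, and `2kr + 1 ≤ m`, so antitonicity in the index concludes. The commutator is the case
`k = 2` with the pairs `(C, Z)` and `(Z, -C)`. -/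

theorem Module.rank_lt_natCast_iff {K V : Type*} [DivisionRing K] [AddCommGroup V] [Module K V]
    {n : ℕ} : Module.rank K V < n ↔ FiniteDimensional K V ∧ Module.finrank K V < n := by
  constructor
  · intro h
    exact ⟨Module.rank_lt_aleph0_iff.mp (h.trans Cardinal.natCast_lt_aleph0),
      Module.finrank_lt_of_rank_lt h⟩
  · rintro ⟨_, h⟩
    rw [← Module.finrank_eq_rank]
    exact_mod_cast h

theorem Real.le_sInf_add_sInf {s t : Set ℝ} (hs : s.Nonempty) (ht : t.Nonempty) {x : ℝ}
    (h : ∀ a ∈ s, ∀ b ∈ t, x ≤ a + b) : x ≤ sInf s + sInf t := by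
  have hs' : ∀ b ∈ t, x - b ≤ sInf s :=
    fun b hb => le_csInf hs fun a ha => by linarith [h a ha b hb]
  have ht' : x - sInf s ≤ sInf t := le_csInf ht fun b hb => by linarith [hs' b hb]
  linarith

theorem Real.le_sInf_mul_sInf {s t : Set ℝ} (hs : s.Nonempty) (ht : t.Nonempty)
    (hs₀ : ∀ a ∈ s, 0 ≤ a) (ht₀ : ∀ b ∈ t, 0 ≤ b) {x : ℝ}
    (h : ∀ a ∈ s, ∀ b ∈ t, x ≤ a * b) : x ≤ sInf s * sInf t := by
  have hs' : ∀ b ∈ t, x ≤ sInf s * b := by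
    intro b hb
    rw [mul_comm, ← smul_eq_mul, ← Real.sInf_smul_of_nonneg (ht₀ b hb)]
    refine le_csInf hs.smul_set ?_
    rintro _ ⟨a, ha, rfl⟩
    exact (h a ha b hb).trans_eq (mul_comm a b)
  rw [← smul_eq_mul, ← Real.sInf_smul_of_nonneg (Real.sInf_nonneg hs₀)]
  refine le_csInf ht.smul_set ?_
  rintro _ ⟨b, hb, rfl⟩
  exact hs' b hb

theorem Nat.exists_ceil_div_eq_succ {m q : ℕ} (hm : 1 ≤ m) (hq : 0 < q) :
    ∃ r : ℕ, ⌈(m : ℝ) / q⌉₊ = r + 1 ∧ q * r < m := by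
  obtain ⟨r, hr⟩ := Nat.exists_eq_add_one.mpr (Nat.ceil_pos.mpr (by positivity : (0 : ℝ) < m / q))
  have hrm : (r : ℝ) < m / q := Nat.lt_ceil.mp (by omega)
  rw [lt_div_iff₀ (by positivity)] at hrm
  exact ⟨r, hr, by rw [mul_comm]; exact_mod_cast hrm⟩

section SNumbers

variable {H : Type*} [NormedAddCommGroup H] [InnerProductSpace ℂ H]

def lowRank (n : ℕ) : Set (H →L[ℂ] H) := {F | (F : H →ₗ[ℂ] H).rank < n}

theorem lowRank_mono {m n : ℕ} (hmn : m ≤ n) : (lowRank m : Set (H →L[ℂ] H)) ⊆ lowRank n :=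
  Set.ofPred_subset_ofPred.mpr fun _ hF => hF.trans_le (by exact_mod_cast hmn)

theorem lowRank_zero : (lowRank 0 : Set (H →L[ℂ] H)) = ∅ := by
  simp [lowRank]

theorem zero_mem_lowRank {n : ℕ} (hn : 0 < n) : (0 : H →L[ℂ] H) ∈ lowRank n := by
  show LinearMap.rank _ < _
  simpa using hn

theorem add_mem_lowRank {F G : H →L[ℂ] H} {m n : ℕ} (hF : F ∈ lowRank (m + 1))
    (hG : G ∈ lowRank (n + 1)) : F + G ∈ lowRank (m + n + 1) := by
  have hF' : (F : H →ₗ[ℂ] H).rank ≤ m := Cardinal.lt_natCast_add_one_iff.mp (by exact_mod_cast hF)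
  have hG' : (G : H →ₗ[ℂ] H).rank ≤ n := Cardinal.lt_natCast_add_one_iff.mp (by exact_mod_cast hG)
  calc ((F + G : H →L[ℂ] H) : H →ₗ[ℂ] H).rank ≤ (F : H →ₗ[ℂ] H).rank + (G : H →ₗ[ℂ] H).rank :=
        LinearMap.rank_add_le _ _
    _ ≤ m + n := add_le_add hF' hG'
    _ < (m + n + 1 : ℕ) := by exact_mod_cast Nat.lt_succ_self _

theorem comp_mem_lowRank_left {F : H →L[ℂ] H} {n : ℕ} (hF : F ∈ lowRank n) (B : H →L[ℂ] H) :
    F ∘L B ∈ lowRank n :=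
  (LinearMap.rank_comp_le_left _ _).trans_lt hF

theorem comp_mem_lowRank_right (A : H →L[ℂ] H) {G : H →L[ℂ] H} {n : ℕ} (hG : G ∈ lowRank n) :
    A ∘L G ∈ lowRank n :=
  (LinearMap.rank_comp_le_right _ _).trans_lt hG

theorem neg_mem_lowRank {F : H →L[ℂ] H} {n : ℕ} (hF : F ∈ lowRank n) : -F ∈ lowRank n := by
  show LinearMap.rank _ < _
  rwa [ContinuousLinearMap.toLinearMap_neg, LinearMap.rank, LinearMap.range_neg]

theorem sNum_eq_sInf_image (W : H →L[ℂ] H) (n : ℕ) :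
    sNum W n = sInf ((‖W - ·‖) '' lowRank n) := by
  simp only [sNum, lowRank, LinearMap.rank, Module.rank_lt_natCast_iff, Set.image, eq_comm,
    Set.mem_ofPred_eq, and_assoc]

theorem sNum_le_norm_sub (W : H →L[ℂ] H) {F : H →L[ℂ] H} {n : ℕ} (hF : F ∈ lowRank n) :
    sNum W n ≤ ‖W - F‖ := by
  rw [sNum_eq_sInf_image]
  exact csInf_le ⟨0, by rintro _ ⟨G, -, rfl⟩; exact norm_nonneg _⟩ ⟨F, hF, rfl⟩

theorem sNum_antitone (W : H →L[ℂ] H) {m n : ℕ} (hm : 0 < m) (hmn : m ≤ n) :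
    sNum W n ≤ sNum W m := by
  rw [sNum_eq_sInf_image W m]
  refine le_csInf ⟨_, 0, zero_mem_lowRank hm, rfl⟩ ?_
  rintro _ ⟨F, hF, rfl⟩
  exact sNum_le_norm_sub W (lowRank_mono hmn hF)

theorem sNum_neg (W : H →L[ℂ] H) (n : ℕ) : sNum (-W) n = sNum W n := by
  rcases Nat.eq_zero_or_pos n with rfl | hn
  · simp only [sNum_eq_sInf_image, lowRank_zero, Set.image_empty]
  have neg_le : ∀ V : H →L[ℂ] H, sNum (-V) n ≤ sNum V n := by
    intro V
    rw [sNum_eq_sInf_image V]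
    refine le_csInf ⟨_, 0, zero_mem_lowRank hn, rfl⟩ ?_
    rintro _ ⟨F, hF, rfl⟩
    calc sNum (-V) n ≤ ‖-V - -F‖ := sNum_le_norm_sub _ (neg_mem_lowRank hF)
      _ = ‖V - F‖ := by rw [sub_neg_eq_add, neg_add_eq_sub, norm_sub_rev]
  exact le_antisymm (neg_le W) (by simpa using neg_le (-W))

theorem sNum_add_le_norm_add (A B : H →L[ℂ] H) {F G : H →L[ℂ] H} {m n : ℕ}
    (hF : F ∈ lowRank (m + 1)) (hG : G ∈ lowRank (n + 1)) :
    sNum (A + B) (m + n + 1) ≤ ‖A - F‖ + ‖B - G‖ :=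
  calc sNum (A + B) (m + n + 1) ≤ ‖A + B - (F + G)‖ := sNum_le_norm_sub _ (add_mem_lowRank hF hG)
    _ = ‖(A - F) + (B - G)‖ := by rw [add_sub_add_comm]
    _ ≤ ‖A - F‖ + ‖B - G‖ := norm_add_le _ _

theorem sNum_comp_le_norm_mul (A B : H →L[ℂ] H) {F G : H →L[ℂ] H} {m n : ℕ}
    (hF : F ∈ lowRank (m + 1)) (hG : G ∈ lowRank (n + 1)) :
    sNum (A ∘L B) (m + n + 1) ≤ ‖A - F‖ * ‖B - G‖ :=
  have hK : F ∘L B + (A - F) ∘L G ∈ lowRank (m + n + 1) :=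
    add_mem_lowRank (comp_mem_lowRank_left hF B) (comp_mem_lowRank_right _ hG)
  calc sNum (A ∘L B) (m + n + 1) ≤ ‖A ∘L B - (F ∘L B + (A - F) ∘L G)‖ := sNum_le_norm_sub _ hK
    _ = ‖(A - F) ∘L (B - G)‖ := by simp only [← ContinuousLinearMap.mul_def]; noncomm_ring
    _ ≤ ‖A - F‖ * ‖B - G‖ := ContinuousLinearMap.opNorm_comp_le _ _

theorem lowRank_succ_nonempty (n : ℕ) : (lowRank (n + 1) : Set (H →L[ℂ] H)).Nonempty :=
  ⟨0, zero_mem_lowRank n.succ_pos⟩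

theorem sNum_add_le (A B : H →L[ℂ] H) (m n : ℕ) :
    sNum (A + B) (m + n + 1) ≤ sNum A (m + 1) + sNum B (n + 1) := by
  rw [sNum_eq_sInf_image A, sNum_eq_sInf_image B]
  refine Real.le_sInf_add_sInf ((lowRank_succ_nonempty m).image _)
    ((lowRank_succ_nonempty n).image _) ?_
  rintro _ ⟨F, hF, rfl⟩ _ ⟨G, hG, rfl⟩
  exact sNum_add_le_norm_add A B hF hG

theorem sNum_comp_le (A B : H →L[ℂ] H) (m n : ℕ) :
    sNum (A ∘L B) (m + n + 1) ≤ sNum A (m + 1) * sNum B (n + 1) := by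
  rw [sNum_eq_sInf_image A, sNum_eq_sInf_image B]
  refine Real.le_sInf_mul_sInf ((lowRank_succ_nonempty m).image _)
    ((lowRank_succ_nonempty n).image _) (by rintro _ ⟨F, -, rfl⟩; exact norm_nonneg _)
    (by rintro _ ⟨G, -, rfl⟩; exact norm_nonneg _) ?_
  rintro _ ⟨F, hF, rfl⟩ _ ⟨G, hG, rfl⟩
  exact sNum_comp_le_norm_mul A B hF hG

theorem sNum_sum_le {ι : Type*} (s : Finset ι) (T : ι → H →L[ℂ] H) (n : ℕ) :
    sNum (∑ i ∈ s, T i) (s.card * n + 1) ≤ ∑ i ∈ s, sNum (T i) (n + 1) := by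
  classical
  induction s using Finset.induction_on with
  | empty => simpa using sNum_le_norm_sub (0 : H →L[ℂ] H) (zero_mem_lowRank one_pos)
  | insert a s ha ih =>
    rw [Finset.sum_insert ha, Finset.sum_insert ha, Finset.card_insert_of_notMem ha,
      show (s.card + 1) * n + 1 = n + s.card * n + 1 by ring]
    exact (sNum_add_le _ _ _ _).trans (by gcongr)

theorem sNum_sum_comp_le {ι : Type*} (s : Finset ι) (C Z : ι → H →L[ℂ] H) (r : ℕ) :
    sNum (∑ i ∈ s, C i ∘L Z i) (s.card * (r + r) + 1) ≤
      ∑ i ∈ s, sNum (C i) (r + 1) * sNum (Z i) (r + 1) :=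
  (sNum_sum_le s _ (r + r)).trans (Finset.sum_le_sum fun i _ => sNum_comp_le (C i) (Z i) r r)

theorem sNum_sum_comp_le_ceil {ι : Type*} (s : Finset ι) (hs : s.Nonempty)
    (C Z : ι → H →L[ℂ] H) {m : ℕ} (hm : 1 ≤ m) :
    sNum (∑ i ∈ s, C i ∘L Z i) m ≤
      ∑ i ∈ s, sNum (C i) ⌈(m : ℝ) / (2 * s.card)⌉₊ * sNum (Z i) ⌈(m : ℝ) / (2 * s.card)⌉₊ := by
  obtain ⟨r, hr, hrm⟩ := Nat.exists_ceil_div_eq_succ hm (Nat.mul_pos two_pos hs.card_pos)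
  push_cast at hr
  rw [hr]
  calc sNum (∑ i ∈ s, C i ∘L Z i) m ≤ sNum (∑ i ∈ s, C i ∘L Z i) (s.card * (r + r) + 1) :=
        sNum_antitone _ (Nat.succ_pos _)
          (by linarith [show s.card * (r + r) = 2 * s.card * r by ring])
    _ ≤ _ := sNum_sum_comp_le s C Z r

end SNumbers

theorem sNum_sum_of_products_general
    {H : Type*} [NormedAddCommGroup H] [InnerProductSpace ℂ H]
    (k : ℕ) (hk : 1 ≤ k) (C Z : ℕ → H →L[ℂ] H) :
    (∀ m, 1 ≤ m →
      sNum (∑ i ∈ Finset.Icc 1 k, C i ∘L Z i) m ≤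
        ∑ i ∈ Finset.Icc 1 k,
          sNum (C i) ⌈(m : ℝ) / (2 * k)⌉₊ * sNum (Z i) ⌈(m : ℝ) / (2 * k)⌉₊) ∧
    (∀ C' Z' : H →L[ℂ] H, IsCompactOperator (⇑C') → IsCompactOperator (⇑Z') →
      ∀ m, 1 ≤ m →
        sNum (C' ∘L Z' - Z' ∘L C') m ≤
          2 * (sNum C' ⌈(m : ℝ) / 4⌉₊ * sNum Z' ⌈(m : ℝ) / 4⌉₊)) := by
  refine ⟨fun m hm => ?_, fun C' Z' _ _ m hm => ?_⟩
  · simpa using sNum_sum_comp_le_ceil (Finset.Icc 1 k) (Finset.nonempty_Icc.mpr hk) C Z hm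
  · have h := sNum_sum_comp_le_ceil Finset.univ Finset.univ_nonempty ![C', Z'] ![Z', -C'] hm
    simp only [Finset.card_univ, Fintype.card_fin, Fin.sum_univ_two, Matrix.cons_val_zero,
      Matrix.cons_val_one, ContinuousLinearMap.comp_neg, sNum_neg, Nat.succ_eq_add_one,
      Nat.reduceAdd, Nat.cast_ofNat] at h
    rwa [← sub_eq_add_neg, mul_comm (sNum Z' _), ← two_mul, show (2 * 2 : ℝ) = 4 by norm_num] at h

/-- If `T = ∑_{i=1}^k C i ∘ Z i` with all `C i`, `Z i` compact, then for all
`m ≥ 1`, `s m (T) ≤ ∑_{i=1}^k s ⌈m/(2k)⌉ (C i) * s ⌈m/(2k)⌉ (Z i)`.  In particular, if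
`T = CZ - ZC` with `C, Z` compact, then `s m (T) ≤ 2 * s ⌈m/4⌉ (C) * s ⌈m/4⌉ (Z)`. -/
theorem sNum_sum_of_products
    {H : Type*} [NormedAddCommGroup H] [InnerProductSpace ℂ H] [CompleteSpace H]
    (k : ℕ) (hk : 1 ≤ k) (C Z : ℕ → H →L[ℂ] H)
    (hC : ∀ i, 1 ≤ i → i ≤ k → IsCompactOperator (⇑(C i)))
    (hZ : ∀ i, 1 ≤ i → i ≤ k → IsCompactOperator (⇑(Z i))) :
    (∀ m, 1 ≤ m →
      sNum (∑ i ∈ Finset.Icc 1 k, C i ∘L Z i) m ≤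
        ∑ i ∈ Finset.Icc 1 k,
          sNum (C i) ⌈(m : ℝ) / (2 * k)⌉₊ * sNum (Z i) ⌈(m : ℝ) / (2 * k)⌉₊) ∧
    (∀ C' Z' : H →L[ℂ] H, IsCompactOperator (⇑C') → IsCompactOperator (⇑Z') →
      ∀ m, 1 ≤ m →
        sNum (C' ∘L Z' - Z' ∘L C') m ≤
          2 * (sNum C' ⌈(m : ℝ) / 4⌉₊ * sNum Z' ⌈(m : ℝ) / 4⌉₊)) :=
  sNum_sum_of_products_general k hk C Z
end
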